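/- arXiv:2403.07674 — 6 statements merged into one kernel-verified Lean document; each statement's English description precedes it below -/
import Mathlib

section
/- For any irrational α in (0,1) and any positive integer N, the set of gap lengths formed by arranging the points {0}, {α}, {2α}, ..., {(N-1)α}, 1 in increasing order in [0,1] has cardinality at most 3. -/
open Set

/-- The partition points `{0·α}, {1·α}, …, {(N-1)·α}` together with `1`. -/
noncomputable def cfPoints (α : ℝ) (N : ℕ) : Set ℝ :=
  insert 1 ((fun k : ℕ => Int.fract (k * α)) '' Set.Iio N)

/-- The set of gap lengths between consecutive points of `cfPoints α N`. -/
noncomputable def gaps (α : ℝ) (N : ℕ) : Set ℝ :=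
  {d | ∃ x ∈ cfPoints α N, ∃ y ∈ cfPoints α N,
    x < y ∧ (∀ z ∈ cfPoints α N, z ≤ x ∨ y ≤ z) ∧ d = y - x}

/-- Circular offset from point `k` to point `m`. -/
noncomputable def off (α : ℝ) (k m : ℕ) : ℝ := Int.fract (((m : ℤ) - (k : ℤ)) * α)

/-- `(k, l)` is a circular gap: no point strictly inside the arc from `p_k` to `p_l`. -/
def CG (α : ℝ) (N k l : ℕ) : Prop :=
  ∀ m, m < N → off α k m = 0 ∨ off α k l ≤ off α k m

noncomputable def gmin (α : ℝ) (N k : ℕ) : ℝ :=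
  sInf ((fun m => off α k m) '' {m | m < N ∧ m ≠ k})

noncomputable def hmin (α : ℝ) (N l : ℕ) : ℝ :=
  sInf ((fun m => off α m l) '' {m | m < N ∧ m ≠ l})

lemma fract_sub_fract (a b : ℝ) :
    Int.fract (Int.fract a - Int.fract b) = Int.fract (a - b) := by
  have h : Int.fract a - Int.fract b = (a - b) + ((⌊b⌋ - ⌊a⌋ : ℤ) : ℝ) := by
    rw [← Int.self_sub_floor, ← Int.self_sub_floor]; push_cast; ring
  rw [h, Int.fract_add_intCast]

lemma fract_add_fract (a b : ℝ) :
    Int.fract (Int.fract a + Int.fract b) = Int.fract (a + b) := by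
  have h : Int.fract a + Int.fract b = (a + b) + ((-⌊b⌋ - ⌊a⌋ : ℤ) : ℝ) := by
    rw [← Int.self_sub_floor, ← Int.self_sub_floor]; push_cast; ring
  rw [h, Int.fract_add_intCast]

lemma fract_pos_irr {α : ℝ} (hirr : Irrational α) {j : ℤ} (hj : j ≠ 0) :
    0 < Int.fract ((j : ℝ) * α) := by
  rcases (Int.fract_nonneg ((j : ℝ) * α)).lt_or_eq with h | h
  · exact h
  · exfalso
    have hi := hirr.intCast_mul hj
    have h2 : (j : ℝ) * α = (⌊(j : ℝ) * α⌋ : ℝ) := by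
      have h3 := Int.floor_add_fract ((j : ℝ) * α)
      linarith
    exact hi.ne_int _ h2

lemma off_self (α : ℝ) (k : ℕ) : off α k k = 0 := by simp [off]

lemma off_pos {α : ℝ} (hirr : Irrational α) {k m : ℕ} (h : m ≠ k) : 0 < off α k m := by
  have hj : ((m : ℤ) - (k : ℤ)) ≠ 0 := by omega
  have := fract_pos_irr hirr hj
  unfold off
  push_cast at this ⊢
  convert this using 3

lemma off_lt_one (α : ℝ) (k m : ℕ) : off α k m < 1 := Int.fract_lt_one _

lemma off_nonneg (α : ℝ) (k m : ℕ) : 0 ≤ off α k m := Int.fract_nonneg _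

lemma off_eq_fract_sub (α : ℝ) (k m : ℕ) :
    off α k m = Int.fract (Int.fract ((m : ℝ) * α) - Int.fract ((k : ℝ) * α)) := by
  rw [fract_sub_fract]
  unfold off
  congr 1
  push_cast
  ring

lemma off_succ (α : ℝ) (k m : ℕ) : off α (k + 1) (m + 1) = off α k m := by
  unfold off
  congr 1
  push_cast
  ring

lemma CG_eq_gmin {α : ℝ} (hirr : Irrational α) {N k l : ℕ} (hl : l < N) (hlk : l ≠ k)
    (hcg : CG α N k l) : off α k l = gmin α N k := by
  have hfin : ((fun m => off α k m) '' {m | m < N ∧ m ≠ k}).Finite :=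
    ((Set.finite_Iio N).subset fun m hm => hm.1).image _
  have hmem : off α k l ∈ (fun m => off α k m) '' {m | m < N ∧ m ≠ k} :=
    ⟨l, ⟨hl, hlk⟩, rfl⟩
  have hlb : ∀ d ∈ (fun m => off α k m) '' {m | m < N ∧ m ≠ k}, off α k l ≤ d := by
    rintro d ⟨m, ⟨hm, hmk⟩, rfl⟩
    rcases hcg m hm with h | h
    · exact absurd h (off_pos hirr hmk).ne'
    · exact h
  exact le_antisymm (le_csInf ⟨_, hmem⟩ hlb) (csInf_le hfin.bddBelow hmem)

lemma CG_eq_hmin {α : ℝ} (hirr : Irrational α) {N k l : ℕ} (hk : k < N) (hkl : k ≠ l)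
    (hcg : CG α N k l) : off α k l = hmin α N l := by
  have hfin : ((fun m => off α m l) '' {m | m < N ∧ m ≠ l}).Finite :=
    ((Set.finite_Iio N).subset fun m hm => hm.1).image _
  have hmem : off α k l ∈ (fun m => off α m l) '' {m | m < N ∧ m ≠ l} :=
    ⟨k, ⟨hk, hkl⟩, rfl⟩
  have hlb : ∀ d ∈ (fun m => off α m l) '' {m | m < N ∧ m ≠ l}, off α k l ≤ d := by
    rintro d ⟨m, ⟨hm, hml⟩, rfl⟩
    by_contra hlt
    push_neg at hlt
    have he : 0 < off α m l := off_pos hirr (Ne.symm hml)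
    have hkey : off α k m = off α k l - off α m l := by
      have h1 : off α k m = Int.fract (off α k l - off α m l) := by
        unfold off
        rw [fract_sub_fract]
        congr 1
        push_cast
        ring
      rw [h1]
      exact Int.fract_eq_self.mpr ⟨by linarith, by linarith [off_lt_one α k l]⟩
    rcases hcg m hm with h | h
    · rw [hkey] at h; linarith
    · rw [hkey] at h; linarith
  exact le_antisymm (le_csInf ⟨_, hmem⟩ hlb) (csInf_le hfin.bddBelow hmem)

lemma three_gap_main {α : ℝ} (hirr : Irrational α) {N : ℕ} (hN : 2 ≤ N) :
    ∀ t k l, k < N → l < N → k ≠ l → CG α N k l → N - 1 - k ≤ t →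
    off α k l ∈ ({gmin α N (N-1), hmin α N (N-1), gmin α N 0 + hmin α N 0} : Set ℝ) := by
  intro t
  induction t with
  | zero =>
    intro k l hk hl hkl hcg ht
    have hk1 : k = N - 1 := by omega
    subst hk1
    exact Or.inl (CG_eq_gmin hirr hl (Ne.symm hkl) hcg)
  | succ t ih =>
    intro k l hk hl hkl hcg ht
    by_cases hk1 : k = N - 1
    · subst hk1
      exact Or.inl (CG_eq_gmin hirr hl (Ne.symm hkl) hcg)
    by_cases hl1 : l = N - 1
    · subst hl1
      exact Or.inr (Or.inl (CG_eq_hmin hirr hk hkl hcg))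
    have hk2 : k + 1 < N := by omega
    have hl2 : l + 1 < N := by omega
    have hDkl : off α (k+1) (l+1) = off α k l := off_succ α k l
    have hshift : ∀ m, 1 ≤ m → m < N →
        off α (k+1) m = 0 ∨ off α k l ≤ off α (k+1) m := by
      intro m hm1 hmN
      obtain ⟨m', rfl⟩ : ∃ m', m = m' + 1 := ⟨m - 1, by omega⟩
      rw [off_succ]
      exact hcg m' (by omega)
    have hcpos : 0 < off α (k+1) 0 := off_pos hirr (by omega)
    by_cases hcD : off α (k+1) 0 < off α k l
    · -- interior case: point 0 lies strictly inside the shifted gap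
      have hcg1 : CG α N (k+1) 0 := by
        intro m hm
        rcases Nat.eq_zero_or_pos m with rfl | hm1
        · exact Or.inr le_rfl
        · rcases hshift m hm1 hm with h | h
          · exact Or.inl h
          · exact Or.inr (by linarith)
      have hDuc : off α k l = Int.fract (off α 0 (l+1) + off α (k+1) 0) := by
        unfold off
        rw [fract_add_fract]
        congr 1
        push_cast
        ring
      have hu0 : 0 ≤ off α 0 (l+1) := off_nonneg _ _ _
      have hu1 : off α 0 (l+1) < 1 := off_lt_one _ _ _
      have hc1 : off α (k+1) 0 < 1 := off_lt_one _ _ _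
      have hsum : off α 0 (l+1) + off α (k+1) 0 < 1 := by
        by_contra h
        push_neg at h
        have h3 : Int.fract (off α 0 (l+1) + off α (k+1) 0 - 1)
            = off α 0 (l+1) + off α (k+1) 0 - 1 :=
          Int.fract_eq_self.mpr ⟨by linarith, by linarith⟩
        have h2 : Int.fract (off α 0 (l+1) + off α (k+1) 0)
            = off α 0 (l+1) + off α (k+1) 0 - 1 := by
          calc Int.fract (off α 0 (l+1) + off α (k+1) 0)
              = Int.fract (off α 0 (l+1) + off α (k+1) 0 - ((1:ℤ):ℝ)) :=
                (Int.fract_sub_intCast _ _).symm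
            _ = off α 0 (l+1) + off α (k+1) 0 - 1 := by rw [Int.cast_one, h3]
        rw [h2] at hDuc
        linarith
      have hu : off α 0 (l+1) = off α k l - off α (k+1) 0 := by
        rw [hDuc, Int.fract_eq_self.mpr ⟨by linarith, hsum⟩]
        ring
      have hcg2 : CG α N 0 (l+1) := by
        intro m hm
        rcases eq_or_ne (off α 0 m) 0 with h0 | h0
        · exact Or.inl h0
        · refine Or.inr ?_
          by_contra hlt
          push_neg at hlt
          have hm0 : m ≠ 0 := by rintro rfl; exact h0 (off_self α 0)
          have hw : off α (k+1) m = off α 0 m + off α (k+1) 0 := by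
            have h1 : off α (k+1) m = Int.fract (off α 0 m + off α (k+1) 0) := by
              unfold off
              rw [fract_add_fract]
              congr 1
              push_cast
              ring
            rw [h1]
            exact Int.fract_eq_self.mpr
              ⟨add_nonneg (off_nonneg α 0 m) (off_nonneg α (k+1) 0), by linarith⟩
          rcases hshift m (by omega) hm with h | h
          · rw [hw] at h
            have := off_nonneg α 0 m
            linarith
          · rw [hw] at h
            linarith
      have h1 : off α 0 (l+1) = gmin α N 0 := CG_eq_gmin hirr hl2 (by omega) hcg2
      have h2 : off α (k+1) 0 = hmin α N 0 := CG_eq_hmin hirr hk2 (by omega) hcg1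
      refine Or.inr (Or.inr ?_)
      have : off α k l = gmin α N 0 + hmin α N 0 := by rw [← h1, ← h2]; linarith
      simpa using this
    · -- shift case
      push_neg at hcD
      have hcg' : CG α N (k+1) (l+1) := by
        intro m hm
        rcases Nat.eq_zero_or_pos m with rfl | hm1
        · exact Or.inr (by rw [hDkl]; exact hcD)
        · rcases hshift m hm1 hm with h | h
          · exact Or.inl h
          · exact Or.inr (by rw [hDkl]; exact h)
      have := ih (k+1) (l+1) hk2 hl2 (by omega) hcg' (by omega)
      rwa [hDkl] at this

lemma gap_CG {α : ℝ} (hirr : Irrational α) (h0 : 0 < α) (h1 : α < 1) {N : ℕ}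
    (hN : 2 ≤ N) {d : ℝ} (hd : d ∈ gaps α N) :
    ∃ k l, k < N ∧ l < N ∧ k ≠ l ∧ CG α N k l ∧ d = off α k l := by
  obtain ⟨x, hx, y, hy, hxy, hcons, rfl⟩ := hd
  have hy1 : y ≤ 1 := by
    rcases hy with rfl | ⟨l, _, rfl⟩
    · exact le_rfl
    · exact (Int.fract_lt_one _).le
  have hx1 : x ≠ 1 := by
    intro h; rw [h] at hxy; linarith
  obtain ⟨k, hkN, rfl⟩ : ∃ k, k < N ∧ Int.fract ((k : ℝ) * α) = x := by
    rcases hx with rfl | ⟨k, hk, rfl⟩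
    · exact absurd rfl hx1
    · exact ⟨k, hk, rfl⟩
  have hmemP : ∀ m, m < N → Int.fract ((m : ℝ) * α) ∈ cfPoints α N :=
    fun m hm => Set.mem_insert_of_mem _ ⟨m, hm, rfl⟩
  have hxx : Int.fract (Int.fract ((k : ℝ) * α)) = Int.fract ((k : ℝ) * α) :=
    Int.fract_fract _
  rcases hy with rfl | ⟨l, hlN, rfl⟩
  · -- y = 1
    have hk0 : k ≠ 0 := by
      rintro rfl
      have hz := hcons _ (hmemP 1 (by omega))
      have hα : Int.fract ((1 : ℕ) * α) = α := by
        push_cast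
        rw [one_mul, Int.fract_eq_self.mpr ⟨h0.le, h1⟩]
      rw [hα] at hz
      simp only [Nat.cast_zero, zero_mul, Int.fract_zero] at hz
      rcases hz with h | h <;> linarith
    have hxpos : 0 < Int.fract ((k : ℝ) * α) := by
      have := off_pos hirr (k := 0) (m := k) hk0
      unfold off at this
      simpa using this
    have hoff0 : off α k 0 = 1 - Int.fract ((k : ℝ) * α) := by
      rw [off_eq_fract_sub]
      simp only [Nat.cast_zero, zero_mul, Int.fract_zero, zero_sub]
      rw [Int.fract_neg (by rw [hxx]; exact hxpos.ne')]
      rw [hxx]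
    refine ⟨k, 0, hkN, by omega, hk0, ?_, ?_⟩
    · intro m hm
      have hz := hcons _ (hmemP m hm)
      have hz' : Int.fract ((m : ℝ) * α) ≤ Int.fract ((k : ℝ) * α) := by
        rcases hz with h | h
        · exact h
        · exact absurd (lt_of_le_of_lt h (Int.fract_lt_one _)) (lt_irrefl 1)
      rcases hz'.lt_or_eq with hlt | heq
      · refine Or.inr ?_
        rw [off_eq_fract_sub α k m, hoff0]
        have hfr : Int.fract (Int.fract ((m : ℝ) * α) - Int.fract ((k : ℝ) * α))
            = Int.fract ((m : ℝ) * α) - Int.fract ((k : ℝ) * α) + 1 := by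
          calc Int.fract (Int.fract ((m : ℝ) * α) - Int.fract ((k : ℝ) * α))
              = Int.fract ((Int.fract ((m : ℝ) * α) - Int.fract ((k : ℝ) * α)) + ((1:ℤ):ℝ)) :=
                (Int.fract_add_intCast _ _).symm
            _ = Int.fract ((m : ℝ) * α) - Int.fract ((k : ℝ) * α) + 1 := by
                rw [Int.cast_one]
                exact Int.fract_eq_self.mpr ⟨by linarith [Int.fract_nonneg ((m : ℝ) * α), Int.fract_lt_one ((m : ℝ) * α), Int.fract_nonneg ((k : ℝ) * α), Int.fract_lt_one ((k : ℝ) * α)], by linarith [Int.fract_nonneg ((m : ℝ) * α), Int.fract_lt_one ((m : ℝ) * α), Int.fract_nonneg ((k : ℝ) * α), Int.fract_lt_one ((k : ℝ) * α)]⟩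
        rw [hfr]
        linarith [Int.fract_nonneg ((m : ℝ) * α)]
      · exact Or.inl (by rw [off_eq_fract_sub α k m, heq]; simp)
    · rw [hoff0]
  · -- y = fract (l α)
    beta_reduce at hxy hcons hy1
    have hkl : k ≠ l := by
      rintro rfl
      exact absurd rfl hxy.ne
    have hoffkl : off α k l = Int.fract ((l : ℝ) * α) - Int.fract ((k : ℝ) * α) := by
      rw [off_eq_fract_sub]
      exact Int.fract_eq_self.mpr ⟨by linarith, by
        linarith [Int.fract_lt_one ((l : ℝ) * α), Int.fract_nonneg ((k : ℝ) * α)]⟩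
    refine ⟨k, l, hkN, hlN, hkl, ?_, ?_⟩
    · intro m hm
      have hz := hcons _ (hmemP m hm)
      rcases hz with h | h
      · rcases h.lt_or_eq with hlt | heq
        · refine Or.inr ?_
          rw [off_eq_fract_sub α k m, hoffkl]
          have hfr : Int.fract (Int.fract ((m : ℝ) * α) - Int.fract ((k : ℝ) * α))
              = Int.fract ((m : ℝ) * α) - Int.fract ((k : ℝ) * α) + 1 := by
            calc Int.fract (Int.fract ((m : ℝ) * α) - Int.fract ((k : ℝ) * α))
                = Int.fract ((Int.fract ((m : ℝ) * α) - Int.fract ((k : ℝ) * α)) + ((1:ℤ):ℝ)) :=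
                  (Int.fract_add_intCast _ _).symm
              _ = Int.fract ((m : ℝ) * α) - Int.fract ((k : ℝ) * α) + 1 := by
                  rw [Int.cast_one]
                  exact Int.fract_eq_self.mpr ⟨by linarith [Int.fract_nonneg ((m : ℝ) * α), Int.fract_lt_one ((m : ℝ) * α), Int.fract_nonneg ((k : ℝ) * α), Int.fract_lt_one ((k : ℝ) * α)], by linarith [Int.fract_nonneg ((m : ℝ) * α), Int.fract_lt_one ((m : ℝ) * α), Int.fract_nonneg ((k : ℝ) * α), Int.fract_lt_one ((k : ℝ) * α)]⟩
          rw [hfr]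
          linarith [Int.fract_nonneg ((m : ℝ) * α), Int.fract_lt_one ((l : ℝ) * α)]
        · exact Or.inl (by rw [off_eq_fract_sub α k m, heq]; simp)
      · refine Or.inr ?_
        rw [off_eq_fract_sub α k m, hoffkl]
        have hfr : Int.fract (Int.fract ((m : ℝ) * α) - Int.fract ((k : ℝ) * α))
            = Int.fract ((m : ℝ) * α) - Int.fract ((k : ℝ) * α) :=
          Int.fract_eq_self.mpr ⟨by linarith, by
            linarith [Int.fract_lt_one ((m : ℝ) * α), Int.fract_nonneg ((k : ℝ) * α)]⟩
        rw [hfr]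
        linarith
    · rw [hoffkl]

/-- The three gap theorem: for irrational `α ∈ (0,1)` there are at most three
distinct gap lengths. -/
theorem three_gap_at_most_three (α : ℝ) (hirr : Irrational α)
    (h0 : 0 < α) (h1 : α < 1) (N : ℕ) (hN : 1 ≤ N) :
    (gaps α N).ncard ≤ 3 := by
  rcases eq_or_lt_of_le hN with hN1 | hN2
  · -- N = 1
    have hsub : gaps α N ⊆ {(1 : ℝ)} := by
      intro d hd
      obtain ⟨x, hx, y, hy, hxy, _, rfl⟩ := hd
      have hmem : ∀ z, z ∈ cfPoints α N → z = 1 ∨ z = 0 := by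
        intro z hz
        rcases hz with rfl | ⟨m, hm, rfl⟩
        · exact Or.inl rfl
        · refine Or.inr ?_
          have : m = 0 := by
            have : m < N := hm
            omega
          subst this
          simp
      rcases hmem x hx with rfl | rfl <;> rcases hmem y hy with rfl | rfl <;>
        first
          | exact absurd hxy (lt_irrefl _)
          | (exfalso; linarith)
          | simp
    calc (gaps α N).ncard ≤ ({(1:ℝ)} : Set ℝ).ncard :=
          Set.ncard_le_ncard hsub (Set.finite_singleton _)
      _ ≤ 3 := by simp
  · -- N ≥ 2
    have hN' : 2 ≤ N := hN2
    have hsub : gaps α N ⊆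
        ({gmin α N (N-1), hmin α N (N-1), gmin α N 0 + hmin α N 0} : Set ℝ) := by
      intro d hd
      obtain ⟨k, l, hk, hl, hkl, hcg, rfl⟩ := gap_CG hirr h0 h1 hN' hd
      exact three_gap_main hirr hN' (N - 1 - k) k l hk hl hkl hcg le_rfl
    have hfin : ({gmin α N (N-1), hmin α N (N-1), gmin α N 0 + hmin α N 0} : Set ℝ).Finite :=
      (Set.finite_singleton _).insert _ |>.insert _
    calc (gaps α N).ncard
        ≤ ({gmin α N (N-1), hmin α N (N-1), gmin α N 0 + hmin α N 0} : Set ℝ).ncard :=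
          Set.ncard_le_ncard hsub hfin
      _ ≤ ({hmin α N (N-1), gmin α N 0 + hmin α N 0} : Set ℝ).ncard + 1 :=
          Set.ncard_insert_le _ _
      _ ≤ (({gmin α N 0 + hmin α N 0} : Set ℝ).ncard + 1) + 1 :=
          Nat.add_le_add_right (Set.ncard_insert_le _ _) 1
      _ ≤ 3 := by simp
end

section
/- For any irrational α in (0,1) and any integer N ≥ 2, the set of gap lengths formed by the points {0}, {α}, ..., {(N-1)α}, 1 in [0,1] has cardinality at least 2. -/
open Set

/-- For irrational `α ∈ (0,1)` and `N ≥ 2` there are at least two distinct gap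
lengths. -/
theorem three_gap_at_least_two (α : ℝ) (hirr : Irrational α)
    (h0 : 0 < α) (h1 : α < 1) (N : ℕ) (hN : 2 ≤ N) :
    2 ≤ (gaps α N).ncard := by
  set S := cfPoints α N with hSdef
  have Sfin : S.Finite := by
    exact Set.Finite.insert _ (Set.Finite.image _ (Set.finite_Iio N))
  have h0S : (0:ℝ) ∈ S := by
    refine Set.mem_insert_iff.2 (Or.inr ⟨0, ?_, by simp⟩)
    simpa using (by omega : 0 < N)
  have hαS : α ∈ S := by
    refine Set.mem_insert_iff.2 (Or.inr ⟨1, ?_, ?_⟩)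
    · simpa using (by omega : 1 < N)
    · simp [Int.fract_eq_self.2 ⟨h0.le, h1⟩]
  have h1S : (1:ℝ) ∈ S := Set.mem_insert _ _
  have hbd : ∀ x ∈ S, 0 ≤ x ∧ x ≤ 1 := by
    intro x hx
    rcases Set.mem_insert_iff.1 hx with h | ⟨k, hk, rfl⟩
    · simp [h]
    · exact ⟨Int.fract_nonneg _, (Int.fract_lt_one _).le⟩
  have pred : ∀ x ∈ S, 0 < x →
      ∃ y ∈ S, y < x ∧ (∀ z ∈ S, z ≤ y ∨ x ≤ z) := by
    intro x hx hxpos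
    have hT : {z | z ∈ S ∧ z < x}.Finite := Sfin.subset (fun z hz => hz.1)
    have hTne : {z | z ∈ S ∧ z < x}.Nonempty := ⟨0, h0S, hxpos⟩
    obtain ⟨y, hyT, hymax⟩ := Set.exists_max_image _ id hT hTne
    refine ⟨y, hyT.1, hyT.2, fun z hz => ?_⟩
    by_cases h : z < x
    · exact Or.inl (hymax z ⟨hz, h⟩)
    · exact Or.inr (not_lt.1 h)
  have gfin : (gaps α N).Finite := by
    apply Set.Finite.subset ((Sfin.prod Sfin).image (fun p => p.2 - p.1))
    rintro e ⟨x, hx, y, hy, _, _, rfl⟩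
    exact ⟨(x, y), ⟨hx, hy⟩, rfl⟩
  -- get some gap d
  obtain ⟨y₀, hy₀S, hy₀lt, hcond₀⟩ := pred 1 h1S one_pos
  have hd : (1 - y₀) ∈ gaps α N := ⟨y₀, hy₀S, 1, h1S, hy₀lt, hcond₀, rfl⟩
  set d := 1 - y₀ with hddef
  have dpos : 0 < d := by simp [hddef]; linarith
  by_contra hcon
  push_neg at hcon
  have huniq : ∀ e ∈ gaps α N, e = d := by
    intro e he
    by_contra hne
    have : 1 < (gaps α N).ncard := (Set.one_lt_ncard gfin).2 ⟨e, he, d, hd, hne⟩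
    omega
  have key : ∀ n : ℕ, ∀ x ∈ S, (S ∩ Set.Iio x).ncard ≤ n → ∃ k : ℕ, x = k * d := by
    intro n
    induction n with
    | zero =>
      intro x hx hc
      have hempty : S ∩ Set.Iio x = ∅ :=
        (Set.ncard_eq_zero (Sfin.inter_of_left _)).1 (Nat.le_zero.1 hc)
      have hx0 : ¬ 0 < x := fun h =>
        (Set.eq_empty_iff_forall_notMem.1 hempty 0) ⟨h0S, h⟩
      have : x = 0 := le_antisymm (not_lt.1 hx0) (hbd x hx).1
      exact ⟨0, by simp [this]⟩
    | succ n ih =>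
      intro x hx hc
      by_cases hx0 : x = 0
      · exact ⟨0, by simp [hx0]⟩
      · have hxpos : 0 < x := lt_of_le_of_ne (hbd x hx).1 (Ne.symm hx0)
        obtain ⟨y, hyS, hylt, hcond⟩ := pred x hx hxpos
        have hgap : x - y ∈ gaps α N := ⟨y, hyS, x, hx, hylt, hcond, rfl⟩
        have hxy : x - y = d := huniq _ hgap
        have hlt : (S ∩ Set.Iio y).ncard < (S ∩ Set.Iio x).ncard := by
          apply Set.ncard_lt_ncard _ (Sfin.inter_of_left _)
          constructor
          · rintro z ⟨hz1, hz2⟩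
            exact ⟨hz1, lt_trans hz2 hylt⟩
          · intro hsub
            exact absurd (hsub ⟨hyS, hylt⟩).2 (lt_irrefl y)
        obtain ⟨k, hk⟩ := ih y hyS (by omega)
        refine ⟨k + 1, ?_⟩
        push_cast
        linarith
  have hbig : ∀ x ∈ S, (S ∩ Set.Iio x).ncard ≤ S.ncard :=
    fun x _ => Set.ncard_le_ncard Set.inter_subset_left Sfin
  obtain ⟨k, hk⟩ := key S.ncard α hαS (hbig α hαS)
  obtain ⟨m, hm⟩ := key S.ncard 1 h1S (hbig 1 h1S)
  have hm0 : (m : ℝ) ≠ 0 := by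
    intro h
    rw [h, zero_mul] at hm
    exact one_ne_zero hm
  have hka : (k : ℝ) = m * α := by
    calc (k:ℝ) = k * (m * d) := by rw [← hm]; ring
      _ = m * (k * d) := by ring
      _ = m * α := by rw [← hk]
  refine hirr ⟨(k : ℚ) / (m : ℚ), ?_⟩
  push_cast
  rw [div_eq_iff hm0]
  linarith
end

section
/- Let α be irrational in (0,1), N ≥ 2, and write the points {0·α}, {1·α}, ..., {(N-1)·α} in increasing order as {u_1 α} < {u_2 α} < ... < {u_N α} where (u_1,...,u_N) is a permutation of (0,1,...,N-1). If N = u_2 + u_N, then u_j = ((j-1)·u_2) mod N for each j = 1, 2, ..., N. -/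
private lemma fract_add_eq (x y : ℝ) (h : Int.fract x + Int.fract y < 1) :
    Int.fract (x + y) = Int.fract x + Int.fract y := by
  have hx := Int.floor_add_fract x
  have hy := Int.floor_add_fract y
  have h2 : x + y = (Int.fract x + Int.fract y) + ((⌊x⌋ + ⌊y⌋ : ℤ) : ℝ) := by
    push_cast; linarith
  rw [h2, Int.fract_add_intCast,
    Int.fract_eq_self.2 ⟨add_nonneg (Int.fract_nonneg x) (Int.fract_nonneg y), h⟩]

private lemma fract_add_eq' (x y : ℝ) (h : 1 ≤ Int.fract x + Int.fract y) :
    Int.fract (x + y) = Int.fract x + Int.fract y - 1 := by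
  have hx := Int.floor_add_fract x
  have hy := Int.floor_add_fract y
  have h2 : x + y = (Int.fract x + Int.fract y - 1) + ((⌊x⌋ + ⌊y⌋ + 1 : ℤ) : ℝ) := by
    push_cast; linarith
  rw [h2, Int.fract_add_intCast, Int.fract_eq_self.2 ⟨by linarith, by
    linarith [Int.fract_lt_one x, Int.fract_lt_one y]⟩]

private lemma fract_sub_eq (x y : ℝ) (h : Int.fract x < Int.fract y) :
    Int.fract (x - y) = Int.fract x - Int.fract y + 1 := by
  have hx := Int.floor_add_fract x
  have hy := Int.floor_add_fract y
  have h2 : x - y = (Int.fract x - Int.fract y + 1) + ((⌊x⌋ - ⌊y⌋ - 1 : ℤ) : ℝ) := by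
    push_cast; linarith
  rw [h2, Int.fract_add_intCast, Int.fract_eq_self.2
    ⟨by linarith [Int.fract_nonneg x, Int.fract_lt_one y], by linarith⟩]

/-- Świerczkowski's recurrence: if the increasing rearrangement
`{u₁α} < {u₂α} < … < {u_N α}` of `{0·α}, …, {(N-1)·α}` (so `u` maps
`{1, …, N}` bijectively onto `{0, …, N-1}`) satisfies `N = u₂ + u_N`, then
`u_j = ((j-1)·u₂) mod N` for all `j = 1, …, N`. -/
theorem swierczkowski_recurrence (α : ℝ) (hirr : Irrational α)
    (h0 : 0 < α) (h1 : α < 1) (N : ℕ) (hN : 2 ≤ N) (u : ℕ → ℕ)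
    (hbij : Set.BijOn u (Set.Icc 1 N) (Set.Iio N))
    (hmono : ∀ j, 1 ≤ j → j < N →
      Int.fract ((u j : ℝ) * α) < Int.fract ((u (j + 1) : ℝ) * α))
    (hsum : N = u 2 + u N) :
    ∀ j, 1 ≤ j → j ≤ N → u j = ((j - 1) * u 2) % N := by
  have hNpos : 0 < N := by omega
  have surj := hbij.2.2
  have maps := hbij.1
  have inj := hbij.2.1
  have hmem : ∀ j, 1 ≤ j → j ≤ N → u j < N := fun j a b =>
    Set.mem_Iio.1 (maps (Set.mem_Icc.2 ⟨a, b⟩))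
  -- fractional parts of positive multiples are positive
  have hfpos : ∀ m : ℕ, 1 ≤ m → 0 < Int.fract ((m : ℝ) * α) := by
    intro m hm
    rcases (Int.fract_nonneg ((m : ℝ) * α)).lt_or_eq with h | h
    · exact h
    · exfalso
      have hi : Irrational ((m : ℝ) * α) := hirr.natCast_mul (by omega)
      have hfl := Int.floor_add_fract ((m : ℝ) * α)
      exact hi.ne_int ⌊(m : ℝ) * α⌋ (by linarith)
  -- strict monotonicity over ranges of indices
  have hmono' : ∀ j1 j2, 1 ≤ j1 → j1 < j2 → j2 ≤ N →
      Int.fract ((u j1 : ℝ) * α) < Int.fract ((u j2 : ℝ) * α) := by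
    intro j1 j2 h1
    induction j2 with
    | zero => intro h _; exact absurd h (Nat.not_lt_zero _)
    | succ n ih =>
      intro h12 h2
      rcases Nat.lt_or_ge j1 n with h | h
      · exact (ih h (by omega)).trans (hmono n (by omega) (by omega))
      · have hj : j1 = n := by omega
        subst hj
        exact hmono j1 h1 (by omega)
  have hmono'' : ∀ j1 j2, 1 ≤ j1 → j1 ≤ N → 1 ≤ j2 → j2 ≤ N →
      Int.fract ((u j1 : ℝ) * α) < Int.fract ((u j2 : ℝ) * α) → j1 < j2 := by
    intro j1 j2 a b c d h
    by_contra hle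
    push_neg at hle
    rcases eq_or_lt_of_le hle with he | hlt
    · rw [he] at h; exact lt_irrefl _ h
    · exact absurd h (not_lt.2 (le_of_lt (hmono' j2 j1 c hlt b)))
  -- u 1 = 0
  have hu1 : u 1 = 0 := by
    obtain ⟨j, hj, hje⟩ := surj (show (0 : ℕ) ∈ Set.Iio N from Set.mem_Iio.2 hNpos)
    simp only [Set.mem_Icc] at hj
    rcases eq_or_lt_of_le hj.1 with h | h
    · rw [← h] at hje; exact hje
    · exfalso
      have hlt := hmono' 1 j le_rfl h hj.2
      rw [hje] at hlt
      simp only [Nat.cast_zero, zero_mul, Int.fract_zero] at hlt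
      exact absurd hlt (not_lt.2 (Int.fract_nonneg _))
  have hsN : u 2 < N := hmem 2 (by omega) hN
  have htN : u N < N := hmem N (by omega) le_rfl
  have hs1 : 1 ≤ u 2 := by
    rcases Nat.eq_zero_or_pos (u 2) with h | h
    · exfalso
      have h21 : (2 : ℕ) = 1 := inj (Set.mem_Icc.2 ⟨by omega, hN⟩)
        (Set.mem_Icc.2 ⟨le_rfl, by omega⟩) (by rw [h, hu1])
      omega
    · exact h
  have ht1 : 1 ≤ u N := by omega
  -- minimality of fract (u 2 * α)
  have hβ : ∀ m, 1 ≤ m → m < N →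
      Int.fract ((u 2 : ℝ) * α) ≤ Int.fract ((m : ℝ) * α) := by
    intro m h1m hmN
    obtain ⟨j, hj, rfl⟩ := surj (Set.mem_Iio.2 hmN)
    simp only [Set.mem_Icc] at hj
    have hj2 : 2 ≤ j := by
      rcases Nat.lt_or_ge j 2 with h | h
      · exfalso
        have hj1 : j = 1 := by omega
        rw [hj1, hu1] at h1m; omega
      · exact h
    rcases eq_or_lt_of_le hj2 with h | h
    · rw [← h]
    · exact le_of_lt (hmono' 2 j (by omega) h hj.2)
  -- maximality of fract (u N * α)
  have hγ : ∀ m, m < N →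
      Int.fract ((m : ℝ) * α) ≤ Int.fract ((u N : ℝ) * α) := by
    intro m hmN
    obtain ⟨j, hj, rfl⟩ := surj (Set.mem_Iio.2 hmN)
    simp only [Set.mem_Icc] at hj
    rcases eq_or_lt_of_le hj.2 with h | h
    · rw [h]
    · exact le_of_lt (hmono' j N hj.1 h le_rfl)
  -- key: adding u 2 mod N strictly increases the fractional part
  have hkey : ∀ k, k < N → k ≠ u N →
      Int.fract ((k : ℝ) * α) < Int.fract ((((k + u 2) % N : ℕ) : ℝ) * α) := by
    intro k hkN hkt
    rcases Nat.lt_or_ge k (u N) with hlt | hge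
    · have hlt' : k + u 2 < N := by omega
      rw [Nat.mod_eq_of_lt hlt']
      have hcast : ((k + u 2 : ℕ) : ℝ) * α = (k : ℝ) * α + (u 2 : ℝ) * α := by
        push_cast; ring
      rw [hcast]
      rcases lt_or_ge (Int.fract ((k : ℝ) * α) + Int.fract ((u 2 : ℝ) * α)) 1 with hc | hc
      · rw [fract_add_eq _ _ hc]
        have := hfpos (u 2) hs1
        linarith
      · exfalso
        have he := fract_add_eq' ((k : ℝ) * α) ((u 2 : ℝ) * α) hc
        have hm : Int.fract ((u 2 : ℝ) * α) ≤ Int.fract ((k : ℝ) * α + (u 2 : ℝ) * α) := by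
          rw [← hcast]; exact hβ (k + u 2) (by omega) hlt'
        have := Int.fract_lt_one ((k : ℝ) * α)
        linarith
    · have hgt : u N < k := lt_of_le_of_ne hge (Ne.symm hkt)
      have hmod : (k + u 2) % N = k - u N := by
        have h1' : k + u 2 = (k - u N) + N := by omega
        rw [h1', Nat.add_mod_right]
        exact Nat.mod_eq_of_lt (by omega)
      rw [hmod]
      have hcast : ((k - u N : ℕ) : ℝ) * α = (k : ℝ) * α - (u N : ℝ) * α := by
        rw [Nat.cast_sub (le_of_lt hgt)]; ring
      rw [hcast]
      have hne : Int.fract ((k : ℝ) * α) < Int.fract ((u N : ℝ) * α) := by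
        rcases (hγ k hkN).lt_or_eq with h | h
        · exact h
        · exfalso
          have e1 := Int.floor_add_fract ((k : ℝ) * α)
          have e2 := Int.floor_add_fract ((u N : ℝ) * α)
          have hxy : (k : ℝ) * α - (u N : ℝ) * α
              = ((⌊(k : ℝ) * α⌋ - ⌊(u N : ℝ) * α⌋ : ℤ) : ℝ) := by
            push_cast; linarith
          have h0' : 0 < Int.fract ((k : ℝ) * α - (u N : ℝ) * α) := by
            rw [← hcast]; exact hfpos _ (by omega)
          rw [hxy, Int.fract_intCast] at h0'
          exact lt_irrefl _ h0'
      rw [fract_sub_eq _ _ hne]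
      have := Int.fract_lt_one ((u N : ℝ) * α)
      linarith
  -- injectivity of k ↦ (k + u 2) % N on [0, N)
  have hfinj : ∀ k1 k2, k1 < N → k2 < N →
      (k1 + u 2) % N = (k2 + u 2) % N → k1 = k2 := by
    intro k1 k2 h1' h2' h
    have h' : k1 + u 2 ≡ k2 + u 2 [MOD N] := h
    have := Nat.ModEq.add_right_cancel' (u 2) h'
    rwa [Nat.ModEq, Nat.mod_eq_of_lt h1', Nat.mod_eq_of_lt h2'] at this
  -- each (u j + u 2) % N occurs later in the ordering
  have hstep : ∀ j, 1 ≤ j → j < N →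
      ∃ m, j + 1 ≤ m ∧ m ≤ N ∧ u m = (u j + u 2) % N := by
    intro j hj1 hjN
    have hujN : u j < N := hmem j hj1 (le_of_lt hjN)
    have hujt : u j ≠ u N := by
      intro h
      have hjN' : j = N := inj (Set.mem_Icc.2 ⟨hj1, le_of_lt hjN⟩)
        (Set.mem_Icc.2 ⟨by omega, le_rfl⟩) h
      omega
    have hkk := hkey (u j) hujN hujt
    obtain ⟨m, hm, hme⟩ := surj (Set.mem_Iio.2 (Nat.mod_lt _ hNpos))
    simp only [Set.mem_Icc] at hm
    refine ⟨m, ?_, hm.2, hme⟩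
    have : j < m := hmono'' j m hj1 (le_of_lt hjN) hm.1 hm.2 (by rw [hme]; exact hkk)
    omega
  -- Świerczkowski's recurrence for consecutive indices
  have hsucc : ∀ d j, 1 ≤ j → j < N → N - 1 - j ≤ d → u (j + 1) = (u j + u 2) % N := by
    intro d
    induction d with
    | zero =>
      intro j hj1 hjN hd
      obtain ⟨m, hm1, hm2, hme⟩ := hstep j hj1 hjN
      have hmj : m = j + 1 := by omega
      rw [← hmj]; exact hme
    | succ d ih =>
      intro j hj1 hjN hd
      obtain ⟨m, hm1, hm2, hme⟩ := hstep j hj1 hjN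
      rcases eq_or_lt_of_le hm1 with h | h
      · rw [h]; exact hme
      · exfalso
        have hi1 : 1 ≤ m - 1 := by omega
        have hiN : m - 1 < N := by omega
        have hii := ih (m - 1) hi1 hiN (by omega)
        rw [show m - 1 + 1 = m from by omega] at hii
        have heq : u (m - 1) = u j := hfinj (u (m - 1)) (u j)
          (hmem _ hi1 (le_of_lt hiN)) (hmem _ hj1 (le_of_lt hjN))
          (by rw [← hii, ← hme])
        have : m - 1 = j := inj (Set.mem_Icc.2 ⟨hi1, le_of_lt hiN⟩)
          (Set.mem_Icc.2 ⟨hj1, le_of_lt hjN⟩) heq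
        omega
  -- conclude by induction
  intro j
  induction j with
  | zero => intro h; exact absurd h (by norm_num)
  | succ n ih =>
    intro _ hn
    rcases Nat.eq_zero_or_pos n with h | h
    · subst h
      simpa using hu1
    · simp only [Nat.add_sub_cancel]
      rw [hsucc N n h (by omega) (by omega), ih h (by omega)]
      have h2 : (n - 1) * u 2 + u 2 = n * u 2 := by
        conv_rhs => rw [show n = (n - 1) + 1 from by omega]
        ring
      calc (((n - 1) * u 2) % N + u 2) % N = ((n - 1) * u 2 + u 2) % N :=
            (Nat.mod_modEq ((n - 1) * u 2) N).add_right (u 2)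
        _ = (n * u 2) % N := by rw [h2]
end

section
/- Let α be irrational in (0,1) with continued fraction convergents p_n/q_n and partial quotients a_1, a_2, .... Then for every n ≥ 2, the number of integers N with q_1 < N ≤ q_n such that the partition of [0,1] by {0}, {α},...,{(N-1)α}, 1 has exactly two distinct gap lengths is at most a_1 + a_2 + ... + a_n. -/
open Set

noncomputable def gaussMap (x : ℝ) : ℝ := Int.fract x⁻¹

noncomputable def cfA (x : ℝ) (n : ℕ) : ℕ := ⌊(gaussMap^[n - 1] x)⁻¹⌋₊

noncomputable def cfQ (x : ℝ) : ℕ → ℕ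
  | 0 => 1
  | 1 => cfA x 1
  | (n + 2) => cfA x (n + 2) * cfQ x (n + 1) + cfQ x n

namespace TwoGapAux

variable {α : ℝ}

/-- iterates of the Gauss map -/
noncomputable def X (α : ℝ) (i : ℕ) : ℝ := gaussMap^[i] α

/-- `Th k = θ_{k-1}`, with `Th 0 = 1`. -/
noncomputable def Th (α : ℝ) (k : ℕ) : ℝ := ∏ i ∈ Finset.range k, X α i

/-- shifted denominators: `qq (k+1) = q_k`, `qq 0 = 0`. -/
noncomputable def qq (α : ℝ) : ℕ → ℕ
  | 0 => 0
  | 1 => 1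
  | (k + 2) => cfA α (k + 1) * qq α (k + 1) + qq α k

/-- shifted numerators: `pp (k+1) = p_k`, `pp 0 = 1`. -/
noncomputable def pp (α : ℝ) : ℕ → ℕ
  | 0 => 1
  | 1 => 0
  | (k + 2) => cfA α (k + 1) * pp α (k + 1) + pp α k

lemma X_zero : X α 0 = α := rfl

lemma X_succ (i : ℕ) : X α (i + 1) = gaussMap (X α i) := by
  simp [X, Function.iterate_succ_apply']


lemma X_prop (hirr : Irrational α) (h0 : 0 < α) (h1 : α < 1) (i : ℕ) : Irrational (X α i) ∧ 0 < X α i ∧ X α i < 1 := by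
  induction i with
  | zero => exact ⟨hirr, h0, h1⟩
  | succ n ih =>
    obtain ⟨hi, hp, hl⟩ := ih
    rw [X_succ]
    have hinv : Irrational (X α n)⁻¹ := hi.inv
    have hfr : Irrational (gaussMap (X α n)) := by
      have h2 := hinv.sub_intCast ⌊(X α n)⁻¹⌋
      rwa [Int.self_sub_floor] at h2
    refine ⟨hfr, ?_, Int.fract_lt_one _⟩
    rcases lt_or_eq_of_le (Int.fract_nonneg (X α n)⁻¹) with h | h
    · exact h
    · exfalso
      have ht : (X α n)⁻¹ = (⌊(X α n)⁻¹⌋ : ℝ) := by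
        have := h.symm
        unfold Int.fract at this
        linarith
      exact hinv.ne_int _ ht
  
lemma cfA_succ (k : ℕ) : cfA α (k + 1) = ⌊(X α k)⁻¹⌋₊ := by
  simp [cfA, X]

lemma cfA_pos (hirr : Irrational α) (h0 : 0 < α) (h1 : α < 1) (k : ℕ) : 1 ≤ cfA α (k + 1) := by
  rw [cfA_succ]
  have h := X_prop hirr h0 h1 k
  exact Nat.le_floor (by rw [Nat.cast_one]; exact one_le_inv_iff₀.mpr ⟨h.2.1, h.2.2.le⟩)

lemma X_succ_eq (hirr : Irrational α) (h0 : 0 < α) (h1 : α < 1) (k : ℕ) : X α (k + 1) = (X α k)⁻¹ - cfA α (k + 1) := by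
  have h := X_prop hirr h0 h1 k
  have hnn : (0:ℝ) ≤ (X α k)⁻¹ := inv_nonneg.mpr h.2.1.le
  rw [X_succ, gaussMap, cfA_succ, Int.fract]
  congr 1
  exact_mod_cast (Int.natCast_floor_eq_floor hnn).symm

lemma Th_zero : Th α 0 = 1 := by simp [Th]

lemma Th_succ (k : ℕ) : Th α (k + 1) = Th α k * X α k := by
  simp [Th, Finset.prod_range_succ]

lemma Th_pos (hirr : Irrational α) (h0 : 0 < α) (h1 : α < 1) (k : ℕ) : 0 < Th α k := by
  induction k with
  | zero => norm_num [Th_zero]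
  | succ n ih => rw [Th_succ]; exact mul_pos ih (X_prop hirr h0 h1 n).2.1

lemma Th_lt (hirr : Irrational α) (h0 : 0 < α) (h1 : α < 1) (k : ℕ) : Th α (k + 1) < Th α k := by
  rw [Th_succ]
  nlinarith [Th_pos hirr h0 h1 k, (X_prop hirr h0 h1 k).2.2, (X_prop hirr h0 h1 k).2.1]

lemma Th_le_one (hirr : Irrational α) (h0 : 0 < α) (h1 : α < 1) (k : ℕ) : Th α k ≤ 1 := by
  induction k with
  | zero => norm_num [Th_zero]
  | succ n ih =>
    rw [Th_succ]
    nlinarith [Th_pos hirr h0 h1 n, (X_prop hirr h0 h1 n).2.1, (X_prop hirr h0 h1 n).2.2]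

lemma Th_lt_one (hirr : Irrational α) (h0 : 0 < α) (h1 : α < 1) (k : ℕ) : Th α (k + 1) < 1 :=
  lt_of_lt_of_le (Th_lt hirr h0 h1 k) (Th_le_one hirr h0 h1 k)

lemma Th_rec (hirr : Irrational α) (h0 : 0 < α) (h1 : α < 1) (k : ℕ) : Th α k = cfA α (k + 1) * Th α (k + 1) + Th α (k + 2) := by
  have h := X_prop hirr h0 h1 k
  have h2 : Th α (k + 2) = Th α (k + 1) * X α (k + 1) := Th_succ (k+1)
  have h3 : X α (k + 1) = (X α k)⁻¹ - cfA α (k + 1) := X_succ_eq hirr h0 h1 k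
  have h4 : Th α (k + 1) = Th α k * X α k := Th_succ k
  have hne : X α k ≠ 0 := ne_of_gt h.2.1
  rw [h2, h3, h4]
  field_simp
  ring

lemma qq_pos (hirr : Irrational α) (h0 : 0 < α) (h1 : α < 1) (k : ℕ) : 1 ≤ qq α (k + 1) := by
  induction k with
  | zero => simp [qq]
  | succ n ih =>
    show 1 ≤ cfA α (n + 1) * qq α (n + 1) + qq α n
    have := cfA_pos hirr h0 h1 n
    nlinarith

lemma qq_mono (hirr : Irrational α) (h0 : 0 < α) (h1 : α < 1) : ∀ {i j : ℕ}, 1 ≤ i → i ≤ j → qq α i ≤ qq α j := by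
  have step : ∀ k, qq α (k + 1) ≤ qq α (k + 1 + 1) := by
    intro k
    show qq α (k+1) ≤ cfA α (k + 1) * qq α (k + 1) + qq α k
    have := cfA_pos hirr h0 h1 k
    nlinarith
  have mono : Monotone (fun i => qq α (i + 1)) := monotone_nat_of_le_succ step
  intro i j hi hij
  obtain ⟨i', rfl⟩ : ∃ i', i = i' + 1 := ⟨i - 1, by omega⟩
  obtain ⟨j', rfl⟩ : ∃ j', j = j' + 1 := ⟨j - 1, by omega⟩
  exact mono (by omega : i' ≤ j')

lemma Dio (hirr : Irrational α) (h0 : 0 < α) (h1 : α < 1) : ∀ k, (qq α k : ℝ) * α - (pp α k : ℝ) = (-1)^(k+1) * Th α k := by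
  have key : ∀ k, ((qq α k : ℝ) * α - (pp α k : ℝ) = (-1)^(k+1) * Th α k) ∧
      ((qq α (k+1) : ℝ) * α - (pp α (k+1) : ℝ) = (-1)^(k+2) * Th α (k+1)) := by
    intro k
    induction k with
    | zero =>
      constructor
      · norm_num [qq, pp, Th_zero]
      · norm_num [qq, pp, Th_succ, Th_zero, X_zero]
    | succ n ih =>
      refine ⟨ih.2, ?_⟩
      have h1' := ih.1
      have h2 := ih.2
      show (qq α (n+2) : ℝ) * α - (pp α (n+2) : ℝ) = (-1)^(n+3) * Th α (n+2)
      have hq : (qq α (n+2) : ℝ) = cfA α (n+1) * qq α (n+1) + qq α n := by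
        show ((cfA α (n + 1) * qq α (n + 1) + qq α n : ℕ) : ℝ) = _
        push_cast; ring
      have hp : (pp α (n+2) : ℝ) = cfA α (n+1) * pp α (n+1) + pp α n := by
        show ((cfA α (n + 1) * pp α (n + 1) + pp α n : ℕ) : ℝ) = _
        push_cast; ring
      have hrec := Th_rec hirr h0 h1 n
      rw [hq, hp]
      have e3 : (-1:ℝ)^(n+3) = -((-1)^(n+2)) := by ring
      have e1 : ((cfA α (n+1) : ℝ) * qq α (n+1) + qq α n) * α - ((cfA α (n+1):ℝ) * pp α (n+1) + pp α n)
          = (cfA α (n+1):ℝ) * ((qq α (n+1):ℝ) * α - pp α (n+1)) + ((qq α n : ℝ) * α - pp α n) := by ring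
      rw [e3, e1, h1', h2]
      have e2 : (-1:ℝ)^(n+1) = -((-1)^(n+2)) := by ring
      rw [e2, hrec]
      ring
  exact fun k => (key k).1


lemma det (α : ℝ) (k : ℕ) :
    (qq α (k+1) : ℤ) * pp α (k+2) - (qq α (k+2) : ℤ) * pp α (k+1) = (-1)^k := by
  induction k with
  | zero => simp [qq, pp]
  | succ n ih =>
    have hq : (qq α (n+3) : ℤ) = cfA α (n+2) * qq α (n+2) + qq α (n+1) := by
      show ((cfA α (n + 2) * qq α (n + 2) + qq α (n+1) : ℕ) : ℤ) = _
      push_cast; ring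
    have hp : (pp α (n+3) : ℤ) = cfA α (n+2) * pp α (n+2) + pp α (n+1) := by
      show ((cfA α (n + 2) * pp α (n + 2) + pp α (n+1) : ℕ) : ℤ) = _
      push_cast; ring
    show (qq α (n+2) : ℤ) * pp α (n+3) - (qq α (n+3) : ℤ) * pp α (n+2) = (-1)^(n+1)
    rw [hq, hp]
    have e : (-1:ℤ)^(n+1) = -((-1)^n) := by ring
    rw [e, ← ih]
    ring

lemma basis (α : ℝ) (k : ℕ) (j p : ℤ) :
    ∃ u v : ℤ, j = u * qq α (k+1) + v * qq α (k+2) ∧ p = u * pp α (k+1) + v * pp α (k+2) := by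
  have h := det α k
  rcases Nat.even_or_odd k with he | ho
  · rw [he.neg_one_pow] at h
    exact ⟨j * pp α (k+2) - p * qq α (k+2), p * qq α (k+1) - j * pp α (k+1),
      by linear_combination (-j) * h, by linear_combination (-p) * h⟩
  · rw [ho.neg_one_pow] at h
    exact ⟨-(j * pp α (k+2) - p * qq α (k+2)), -(p * qq α (k+1) - j * pp α (k+1)),
      by linear_combination j * h, by linear_combination p * h⟩


noncomputable def Fz (α : ℝ) (z : ℤ) : ℝ := Int.fract ((z:ℝ) * α)

lemma Fz_irrat (hirr : Irrational α) {z : ℤ} (hz : z ≠ 0) : Irrational ((z:ℝ) * α) :=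
  hirr.intCast_mul hz

lemma Fz_pos (hirr : Irrational α) {z : ℤ} (hz : z ≠ 0) : 0 < Fz α z := by
  rcases lt_or_eq_of_le (Int.fract_nonneg ((z:ℝ) * α)) with h | h
  · exact h
  · exfalso
    have ht : (z:ℝ) * α = (⌊(z:ℝ) * α⌋ : ℝ) := by
      have := h.symm
      unfold Int.fract at this
      linarith
    exact (Fz_irrat hirr hz).ne_int _ ht

lemma Fz_lt_one (z : ℤ) : Fz α z < 1 := Int.fract_lt_one _

lemma Fz_nonneg (z : ℤ) : 0 ≤ Fz α z := Int.fract_nonneg _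

lemma Fz_eq_of {z : ℤ} {r : ℝ} (h0r : 0 ≤ r) (h1r : r < 1) (m : ℤ)
    (hm : (z:ℝ) * α - r = (m:ℝ)) : Fz α z = r := by
  have h2 : Int.fract ((z:ℝ) * α) = Int.fract r := Int.fract_eq_fract.mpr ⟨m, hm⟩
  rw [Fz, h2, Int.fract_eq_self.mpr ⟨h0r, h1r⟩]

lemma Fz_inj (hirr : Irrational α) {z w : ℤ} (h : Fz α z = Fz α w) : z = w := by
  by_contra hne
  obtain ⟨m, hm⟩ := Int.fract_eq_fract.mp h
  have hz : ((z - w : ℤ) : ℝ) * α = (m:ℝ) := by push_cast; push_cast at hm; linarith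
  exact (Fz_irrat hirr (sub_ne_zero.mpr hne)).ne_int m hz

set_option maxHeartbeats 1000000 in
lemma key (hirr : Irrational α) (h0 : 0 < α) (h1 : α < 1)
    (k m N j : ℕ) (p : ℤ)
    (hm1 : 1 ≤ m) (hmA : m ≤ cfA α (k+1))
    (hN : N ≤ (m+1) * qq α (k+1) + qq α k)
    (hj1 : 1 ≤ j) (hjN : j < N)
    (hlo : -(Th α k - m * Th α (k+1)) ≤ (-1:ℝ)^k * ((j:ℝ) * α - p))
    (hhi : (-1:ℝ)^k * ((j:ℝ) * α - p) ≤ Th α (k+1)) :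
    ((j:ℤ) = qq α (k+1) ∧ p = pp α (k+1)) ∨
    ((j:ℤ) = m * qq α (k+1) + qq α k ∧ p = m * pp α (k+1) + pp α k) := by
  obtain ⟨u, v, hju, hpu⟩ := basis α k j p
  set T1 := Th α (k+1) with hT1def
  set T2 := Th α (k+2) with hT2def
  set A := cfA α (k+1) with hAdef
  have hT1 : 0 < T1 := Th_pos hirr h0 h1 (k+1)
  have hT2 : 0 < T2 := Th_pos hirr h0 h1 (k+2)
  have hT21 : T2 < T1 := Th_lt hirr h0 h1 (k+1)
  have hrec : Th α k = (A:ℝ) * T1 + T2 := Th_rec hirr h0 h1 k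
  have hQ1z : (1:ℤ) ≤ qq α (k+1) := by exact_mod_cast qq_pos hirr h0 h1 k
  have hQ2z : (1:ℤ) ≤ qq α (k+2) := by exact_mod_cast qq_pos hirr h0 h1 (k+1)
  have hQ2eq : (qq α (k+2) : ℤ) = (A:ℤ) * qq α (k+1) + qq α k := by
    show ((cfA α (k + 1) * qq α (k + 1) + qq α k : ℕ) : ℤ) = _
    push_cast; ring
  have hP2eq : (pp α (k+2) : ℤ) = (A:ℤ) * pp α (k+1) + pp α k := by
    show ((cfA α (k + 1) * pp α (k + 1) + pp α k : ℕ) : ℤ) = _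
    push_cast; ring
  have hNz : (N:ℤ) ≤ ((m:ℤ)+1) * qq α (k+1) + qq α k := by exact_mod_cast hN
  have hjz : (j:ℤ) < (N:ℤ) := by exact_mod_cast hjN
  have hj1z : (1:ℤ) ≤ (j:ℤ) := by exact_mod_cast hj1
  have hAmz : (m:ℤ) ≤ (A:ℤ) := by exact_mod_cast hmA
  have hm1z : (1:ℤ) ≤ (m:ℤ) := by exact_mod_cast hm1
  have hqqk : (0:ℤ) ≤ qq α k := Int.ofNat_nonneg _
  have hQ1R : (0:ℤ) ≤ qq α (k+1) := by linarith
  have hsq : (-1:ℝ)^k * (-1:ℝ)^k = 1 := by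
    rw [← pow_add]
    exact Even.neg_one_pow ⟨k, by ring⟩
  have e1' : (qq α (k+1) : ℝ) * α - (pp α (k+1) : ℝ) = (-1:ℝ)^k * T1 := by
    have hd := Dio hirr h0 h1 (k+1)
    rw [hd, hT1def]
    have hpow : (-1:ℝ)^(k+1+1) = (-1:ℝ)^k := by rw [pow_succ, pow_succ]; ring
    rw [hpow]
  have e2' : (qq α (k+2) : ℝ) * α - (pp α (k+2) : ℝ) = -((-1:ℝ)^k * T2) := by
    have hd := Dio hirr h0 h1 (k+2)
    rw [hd, hT2def]
    have hpow : (-1:ℝ)^(k+2+1) = -(-1:ℝ)^k := by rw [pow_succ, pow_succ, pow_succ]; ring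
    rw [hpow]; ring
  have hjR : (j:ℝ) = (u:ℝ) * qq α (k+1) + (v:ℝ) * qq α (k+2) := by exact_mod_cast hju
  have hpR : (p:ℝ) = (u:ℝ) * pp α (k+1) + (v:ℝ) * pp α (k+2) := by exact_mod_cast hpu
  have hV : (-1:ℝ)^k * ((j:ℝ) * α - p) = (u:ℝ) * T1 - (v:ℝ) * T2 := by
    linear_combination ((-1:ℝ)^k * α) * hjR - (-1:ℝ)^k * hpR + ((-1:ℝ)^k * u) * e1'
      + ((-1:ℝ)^k * v) * e2' + ((u:ℝ) * T1 - (v:ℝ) * T2) * hsq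
  rw [hV] at hlo hhi
  have hβ : -(Th α k - (m:ℝ) * T1) = -(((A:ℝ) - m) * T1 + T2) := by rw [hrec]; ring
  rw [hβ] at hlo
  have hAmR : (m:ℝ) ≤ (A:ℝ) := by exact_mod_cast hmA
  rcases le_or_gt v 0 with hv0 | hv1
  · -- v ≤ 0 : conclude u = 1, v = 0, j = q_k
    have hvR : (v:ℝ) ≤ 0 := by exact_mod_cast hv0
    have hvt : (v:ℝ) * T2 ≤ 0 := mul_nonpos_iff.mpr (Or.inr ⟨hvR, hT2.le⟩)
    have huT : (u:ℝ) * T1 ≤ 1 * T1 := by rw [one_mul]; linarith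
    have hu1 : u ≤ 1 := by exact_mod_cast le_of_mul_le_mul_right huT hT1
    have hvq : v * (qq α (k+2) : ℤ) ≤ 0 := mul_nonpos_iff.mpr (Or.inr ⟨hv0, by linarith⟩)
    have hu : 1 ≤ u := by
      by_contra hc
      push_neg at hc
      have hu0 : u ≤ 0 := by omega
      have : u * (qq α (k+1) : ℤ) ≤ 0 := mul_nonpos_iff.mpr (Or.inr ⟨hu0, hQ1R⟩)
      linarith [hju]
    have huu : u = 1 := le_antisymm hu1 hu
    subst huu
    push_cast at hhi hju hpu
    have hv : 0 ≤ (v:ℝ) := by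
      by_contra hc
      push_neg at hc
      have hvt2 : (v:ℝ) * T2 < 0 := mul_neg_of_neg_of_pos hc hT2
      linarith
    have hv' : (0:ℤ) ≤ v := by exact_mod_cast hv
    have hvv : v = 0 := le_antisymm hv0 hv'
    subst hvv
    exact Or.inl ⟨by linear_combination hju, by linear_combination hpu⟩
  · -- v ≥ 1
    have hv1z : (1:ℤ) ≤ v := hv1
    rcases lt_or_eq_of_le hv1z with hv2 | hveq
    · -- v ≥ 2 : contradiction
      exfalso
      have hv2z : (2:ℤ) ≤ v := hv2
      have hv2R : (2:ℝ) ≤ (v:ℝ) := by exact_mod_cast hv2z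
      have hu : (m:ℝ) - A < (u:ℝ) := by
        by_contra hc
        push_neg at hc
        have h1' : (u:ℝ) * T1 ≤ ((m:ℝ) - A) * T1 := mul_le_mul_of_nonneg_right hc hT1.le
        have h2' : 2 * T2 ≤ (v:ℝ) * T2 := mul_le_mul_of_nonneg_right hv2R hT2.le
        linarith
      have huz : (m:ℤ) - A < u := by exact_mod_cast hu
      have huz' : (m:ℤ) - A + 1 ≤ u := huz
      have e : ((m:ℤ) - A + 1) * qq α (k+1) ≤ u * qq α (k+1) :=
        mul_le_mul_of_nonneg_right huz' hQ1R
      have f : (2:ℤ) * qq α (k+2) ≤ v * qq α (k+2) :=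
        mul_le_mul_of_nonneg_right hv2z (by linarith)
      linarith [hju, hQ2eq, hNz, hjz, hQ2z, e, f]
    · -- v = 1
      have hveq' : v = 1 := hveq.symm
      subst hveq'
      push_cast at hlo hhi hju hpu
      have huT : (u:ℝ) * T1 < 2 * T1 := by linarith
      have hu2 : u ≤ 1 := by
        have h2 : (u:ℝ) < 2 := lt_of_mul_lt_mul_right huT hT1.le
        have : (u:ℤ) < 2 := by exact_mod_cast h2
        omega
      rcases eq_or_lt_of_le hu2 with hu1 | hu0
      · -- u = 1 : j = q_k + q_{k+1} ≥ N, contradiction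
        exfalso
        subst hu1
        have e : (m:ℤ) * qq α (k+1) ≤ (A:ℤ) * qq α (k+1) :=
          mul_le_mul_of_nonneg_right hAmz hQ1R
        linarith [hju, hQ2eq, hNz, hjz, e]
      · -- u ≤ 0
        have hu0' : u ≤ 0 := by omega
        have hmT : ((m:ℝ) - A) * T1 ≤ (u:ℝ) * T1 := by linarith
        have huge : (m:ℝ) - A ≤ (u:ℝ) := le_of_mul_le_mul_right hmT hT1
        have hugez : (m:ℤ) - A ≤ u := by exact_mod_cast huge
        rcases eq_or_lt_of_le hugez with hueq | hugt
        · -- u = m - A : j = m q_k + q_{k-1}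
          subst hueq
          refine Or.inr ⟨?_, ?_⟩
          · linear_combination hju + hQ2eq
          · linear_combination hpu + hP2eq
        · -- m - A < u ≤ 0 : j ≥ N, contradiction
          exfalso
          have hstep : (m:ℤ) - A + 1 ≤ u := hugt
          have e : ((m:ℤ) - A + 1) * qq α (k+1) ≤ u * qq α (k+1) :=
            mul_le_mul_of_nonneg_right hstep hQ1R
          linarith [hju, hQ2eq, hNz, hjz, e]


lemma FzN (α : ℝ) (i : ℕ) : Fz α (i:ℤ) = Int.fract ((i:ℝ) * α) := by
  rw [Fz]; norm_num

lemma Fz_as_sub (α : ℝ) (z : ℤ) : Fz α z = (z:ℝ) * α - ⌊(z:ℝ) * α⌋ := rfl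

set_option maxHeartbeats 1000000 in
lemma champs (hirr : Irrational α) (h0 : 0 < α) (h1 : α < 1)
    (k m N : ℕ) (hm1 : 1 ≤ m) (hmA : m ≤ cfA α (k+1))
    (hblo : m * qq α (k+1) + qq α k < N)
    (hbhi : N ≤ (m+1) * qq α (k+1) + qq α k) :
    ∃ mp mm : ℕ, 1 ≤ mp ∧ mp < N ∧ 1 ≤ mm ∧ mm < N ∧
      mp + mm = (m+1) * qq α (k+1) + qq α k ∧
      (∀ j : ℕ, 1 ≤ j → j < N → Fz α (mp:ℤ) ≤ Fz α (j:ℤ) ∧ Fz α (j:ℤ) ≤ Fz α (mm:ℤ)) := by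
  set Q1 := qq α (k+1) with hQ1def
  set c := m * Q1 + qq α k with hcdef
  set T1 := Th α (k+1) with hT1def
  set β := Th α k - m * T1 with hβdef
  set A := cfA α (k+1) with hAdef
  have hT1 : 0 < T1 := Th_pos hirr h0 h1 (k+1)
  have hT1lt : T1 < 1 := Th_lt_one hirr h0 h1 k
  have hT2 : 0 < Th α (k+2) := Th_pos hirr h0 h1 (k+2)
  have hrec : Th α k = (A:ℝ) * T1 + Th α (k+2) := Th_rec hirr h0 h1 k
  have hAmR : (m:ℝ) ≤ (A:ℝ) := by exact_mod_cast hmA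
  have hm1R : (1:ℝ) ≤ (m:ℝ) := by exact_mod_cast hm1
  have hβpos : 0 < β := by
    have h' : 0 ≤ ((A:ℝ) - m) * T1 := mul_nonneg (by linarith) hT1.le
    rw [hβdef, hrec]; linarith
  have hβlt1 : β < 1 := by
    have hk1 : Th α k ≤ 1 := Th_le_one hirr h0 h1 k
    have : (1:ℝ) * T1 ≤ (m:ℝ) * T1 := mul_le_mul_of_nonneg_right hm1R hT1.le
    rw [hβdef]; linarith
  have hQ1pos : 1 ≤ Q1 := qq_pos hirr h0 h1 k
  have hc1 : 1 ≤ c := by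
    have : 1 ≤ m * Q1 := Nat.one_le_iff_ne_zero.mpr (by positivity)
    omega
  have hcN : c < N := hblo
  have hQ1N : Q1 < N := by
    have : Q1 ≤ m * Q1 := Nat.le_mul_of_pos_left _ (by omega)
    omega
  have hcz : ((c:ℕ):ℤ) = (m:ℤ) * (qq α (k+1) : ℤ) + (qq α k : ℤ) := by
    rw [hcdef, hQ1def]; push_cast; ring
  have hD1 : (Q1:ℝ) * α - (pp α (k+1) : ℝ) = (-1:ℝ)^k * T1 := by
    have hd := Dio hirr h0 h1 (k+1)
    have hpow : (-1:ℝ)^(k+1+1) = (-1:ℝ)^k := by rw [pow_succ, pow_succ]; ring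
    rw [hQ1def, hd, hpow, hT1def]
  have hDk : (qq α k : ℝ) * α - (pp α k : ℝ) = -((-1:ℝ)^k * Th α k) := by
    have hd := Dio hirr h0 h1 k
    have hpow : (-1:ℝ)^(k+1) = -(-1:ℝ)^k := by rw [pow_succ]; ring
    rw [hd, hpow]; ring
  have hcR : ((c:ℕ):ℝ) = (m:ℝ) * Q1 + (qq α k : ℝ) := by rw [hcdef]; push_cast; ring
  have hDc : (c:ℝ) * α - ((m:ℤ) * pp α (k+1) + pp α k : ℤ) = (-1:ℝ)^k * (-β) := by
    push_cast
    rw [hcR, hβdef]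
    linear_combination (m:ℝ) * hD1 + hDk
  rcases Nat.even_or_odd k with hpar | hpar
  · -- k even : q_k is the min champion, c is the max champion
    have hsgn : (-1:ℝ)^k = 1 := hpar.neg_one_pow
    rw [hsgn, one_mul] at hD1 hDc
    have hFQ1 : Fz α (Q1:ℤ) = T1 := by
      apply Fz_eq_of (le_of_lt hT1) hT1lt (pp α (k+1))
      push_cast; linarith
    have hFc : Fz α (c:ℤ) = 1 - β := by
      apply Fz_eq_of (by linarith) (by linarith) ((m:ℤ) * pp α (k+1) + pp α k - 1)
      push_cast
      push_cast at hDc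
      linarith
    refine ⟨Q1, c, hQ1pos, hQ1N, hc1, hcN, by rw [hcdef]; ring, ?_⟩
    intro j hj1 hjN
    have hjne : (j:ℤ) ≠ 0 := by exact_mod_cast Nat.one_le_iff_ne_zero.mp hj1
    have hjpos : 0 < Fz α (j:ℤ) := Fz_pos hirr hjne
    have hjlt : Fz α (j:ℤ) < 1 := Fz_lt_one _
    constructor
    · rw [hFQ1]
      by_contra hcon
      push_neg at hcon
      obtain ⟨p, hpdef⟩ : ∃ p : ℤ, p = ⌊(j:ℝ) * α⌋ := ⟨_, rfl⟩
      have hjc2 : ((j:ℤ):ℝ) = (j:ℝ) := by push_cast; ring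
      have hfr : Fz α (j:ℤ) = (j:ℝ) * α - (p:ℝ) := by
        rw [Fz_as_sub, hjc2, ← hpdef]
      have hkey := key hirr h0 h1 k m N j p hm1 hmA hbhi hj1 hjN
        (by rw [hsgn, one_mul, ← hfr, ← hT1def, ← hβdef]; linarith)
        (by rw [hsgn, one_mul, ← hfr, ← hT1def]; linarith)
      rcases hkey with ⟨hjq, hpq⟩ | ⟨hjq, hpq⟩
      · have hjQ : ((j:ℕ):ℝ) = ((qq α (k+1) : ℕ):ℝ) := by exact_mod_cast hjq
        have hL : Fz α (j:ℤ) = T1 := by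
          rw [hfr, hpq, hjQ]
          push_cast
          rw [← hQ1def]
          linarith [hD1]
        linarith
      · have hjeq : (j:ℤ) = (c:ℤ) := hjq.trans hcz.symm
        have hjC : ((j:ℕ):ℝ) = ((c:ℕ):ℝ) := by exact_mod_cast hjeq
        have hR : Fz α (j:ℤ) = -β := by
          rw [hfr, hpq, hjC]
          push_cast
          push_cast at hDc
          linarith [hDc]
        linarith
    · rw [hFc]
      by_contra hcon
      push_neg at hcon
      obtain ⟨p, hpdef⟩ : ∃ p : ℤ, p = ⌊(j:ℝ) * α⌋ + 1 := ⟨_, rfl⟩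
      have hjc2 : ((j:ℤ):ℝ) = (j:ℝ) := by push_cast; ring
      have hval : (j:ℝ) * α - (p:ℝ) = Fz α (j:ℤ) - 1 := by
        rw [Fz_as_sub, hjc2, hpdef]; push_cast; ring
      have hkey := key hirr h0 h1 k m N j p hm1 hmA hbhi hj1 hjN
        (by rw [hsgn, one_mul, hval, ← hT1def, ← hβdef]; linarith)
        (by rw [hsgn, one_mul, hval, ← hT1def]; linarith)
      rcases hkey with ⟨hjq, hpq⟩ | ⟨hjq, hpq⟩
      · have hjQ : ((j:ℕ):ℝ) = ((qq α (k+1) : ℕ):ℝ) := by exact_mod_cast hjq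
        have hL : (j:ℝ) * α - (p:ℝ) = T1 := by
          rw [hpq, hjQ]
          push_cast
          rw [← hQ1def]
          linarith [hD1]
        rw [hval] at hL
        linarith
      · have hjeq : (j:ℤ) = (c:ℤ) := hjq.trans hcz.symm
        have hjC : ((j:ℕ):ℝ) = ((c:ℕ):ℝ) := by exact_mod_cast hjeq
        have hR : (j:ℝ) * α - (p:ℝ) = -β := by
          rw [hpq, hjC]
          push_cast
          push_cast at hDc
          linarith [hDc]
        rw [hval] at hR
        linarith
  · -- k odd : c is the min champion, q_k is the max champion
    have hsgn : (-1:ℝ)^k = -1 := hpar.neg_one_pow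
    rw [hsgn] at hD1 hDc
    rw [neg_one_mul] at hD1
    have hDc' : (c:ℝ) * α - ((m:ℤ) * pp α (k+1) + pp α k : ℤ) = β := by
      rw [hDc]; ring
    have hFQ1 : Fz α (Q1:ℤ) = 1 - T1 := by
      apply Fz_eq_of (by linarith) (by linarith) (pp α (k+1) - 1)
      push_cast; linarith
    have hFc : Fz α (c:ℤ) = β := by
      apply Fz_eq_of (le_of_lt hβpos) hβlt1 ((m:ℤ) * pp α (k+1) + pp α k)
      push_cast
      push_cast at hDc'
      linarith
    refine ⟨c, Q1, hc1, hcN, hQ1pos, hQ1N, by rw [hcdef]; ring, ?_⟩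
    intro j hj1 hjN
    have hjne : (j:ℤ) ≠ 0 := by exact_mod_cast Nat.one_le_iff_ne_zero.mp hj1
    have hjpos : 0 < Fz α (j:ℤ) := Fz_pos hirr hjne
    have hjlt : Fz α (j:ℤ) < 1 := Fz_lt_one _
    constructor
    · rw [hFc]
      by_contra hcon
      push_neg at hcon
      obtain ⟨p, hpdef⟩ : ∃ p : ℤ, p = ⌊(j:ℝ) * α⌋ := ⟨_, rfl⟩
      have hjc2 : ((j:ℤ):ℝ) = (j:ℝ) := by push_cast; ring
      have hfr : Fz α (j:ℤ) = (j:ℝ) * α - (p:ℝ) := by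
        rw [Fz_as_sub, hjc2, ← hpdef]
      have hkey := key hirr h0 h1 k m N j p hm1 hmA hbhi hj1 hjN
        (by rw [hsgn, ← hfr, ← hT1def, ← hβdef]; linarith)
        (by rw [hsgn, ← hfr, ← hT1def]; linarith)
      rcases hkey with ⟨hjq, hpq⟩ | ⟨hjq, hpq⟩
      · have hjQ : ((j:ℕ):ℝ) = ((qq α (k+1) : ℕ):ℝ) := by exact_mod_cast hjq
        have hL : Fz α (j:ℤ) = -T1 := by
          rw [hfr, hpq, hjQ]
          push_cast
          rw [← hQ1def]
          linarith [hD1]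
        linarith
      · have hjeq : (j:ℤ) = (c:ℤ) := hjq.trans hcz.symm
        have hjC : ((j:ℕ):ℝ) = ((c:ℕ):ℝ) := by exact_mod_cast hjeq
        have hR : Fz α (j:ℤ) = β := by
          rw [hfr, hpq, hjC]
          push_cast
          push_cast at hDc'
          linarith [hDc']
        linarith
    · rw [hFQ1]
      by_contra hcon
      push_neg at hcon
      obtain ⟨p, hpdef⟩ : ∃ p : ℤ, p = ⌊(j:ℝ) * α⌋ + 1 := ⟨_, rfl⟩
      have hjc2 : ((j:ℤ):ℝ) = (j:ℝ) := by push_cast; ring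
      have hval : (j:ℝ) * α - (p:ℝ) = Fz α (j:ℤ) - 1 := by
        rw [Fz_as_sub, hjc2, hpdef]; push_cast; ring
      have hkey := key hirr h0 h1 k m N j p hm1 hmA hbhi hj1 hjN
        (by rw [hsgn, hval, ← hT1def, ← hβdef]; linarith)
        (by rw [hsgn, hval, ← hT1def]; linarith)
      rcases hkey with ⟨hjq, hpq⟩ | ⟨hjq, hpq⟩
      · have hjQ : ((j:ℕ):ℝ) = ((qq α (k+1) : ℕ):ℝ) := by exact_mod_cast hjq
        have hL : (j:ℝ) * α - (p:ℝ) = -T1 := by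
          rw [hpq, hjQ]
          push_cast
          rw [← hQ1def]
          linarith [hD1]
        rw [hval] at hL
        linarith
      · have hjeq : (j:ℤ) = (c:ℤ) := hjq.trans hcz.symm
        have hjC : ((j:ℕ):ℝ) = ((c:ℕ):ℝ) := by exact_mod_cast hjeq
        have hR : (j:ℝ) * α - (p:ℝ) = β := by
          rw [hpq, hjC]
          push_cast
          push_cast at hDc'
          linarith [hDc']
        rw [hval] at hR
        linarith


lemma mem_cfPoints_iff {α : ℝ} {N : ℕ} {z : ℝ} :
    z ∈ cfPoints α N ↔ z = 1 ∨ ∃ i : ℕ, i < N ∧ z = Int.fract ((i:ℝ) * α) := by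
  constructor
  · rintro (h | ⟨i, hi, rfl⟩)
    · exact Or.inl h
    · exact Or.inr ⟨i, hi, rfl⟩
  · rintro (h | ⟨i, hi, rfl⟩)
    · exact Or.inl h
    · exact Or.inr ⟨i, hi, rfl⟩

lemma cfPoints_finite (α : ℝ) (N : ℕ) : (cfPoints α N).Finite :=
  ((Set.finite_Iio N).image _).insert 1

lemma gaps_finite (α : ℝ) (N : ℕ) : (gaps α N).Finite := by
  apply Set.Finite.subset (Set.Finite.image2 (fun y x => y - x)
    (cfPoints_finite α N) (cfPoints_finite α N))
  rintro d ⟨x, hx, y, hy, _, _, rfl⟩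
  exact Set.mem_image2_of_mem hy hx

set_option maxHeartbeats 1600000 in
lemma ncard_ne_two (hirr : Irrational α) (N mp mm : ℕ)
    (hmp1 : 1 ≤ mp) (hmpN : mp < N) (hmm1 : 1 ≤ mm) (hmmN : mm < N)
    (hsum : N < mp + mm)
    (hch : ∀ j : ℕ, 1 ≤ j → j < N → Fz α (mp:ℤ) ≤ Fz α (j:ℤ) ∧ Fz α (j:ℤ) ≤ Fz α (mm:ℤ)) :
    (gaps α N).ncard ≠ 2 := by
  have hNpos : 0 < N := by omega
  set a := Fz α (mp:ℤ) with hadef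
  set b := 1 - Fz α (mm:ℤ) with hbdef
  have hmpne : (mp:ℤ) ≠ 0 := by exact_mod_cast Nat.one_le_iff_ne_zero.mp hmp1
  have hmmne : (mm:ℤ) ≠ 0 := by exact_mod_cast Nat.one_le_iff_ne_zero.mp hmm1
  have ha : 0 < a := Fz_pos hirr hmpne
  have ha1 : a < 1 := Fz_lt_one _
  have hb : 0 < b := by rw [hbdef]; linarith [Fz_lt_one (α := α) (mm:ℤ)]
  have hb1 : b < 1 := by rw [hbdef]; linarith [Fz_pos hirr hmmne]
  have hFmm : Fz α (mm:ℤ) = 1 - b := by rw [hbdef]; ring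
  -- membership helpers
  have hPt : ∀ i : ℕ, i < N → Int.fract ((i:ℝ) * α) ∈ cfPoints α N := by
    intro i hi
    exact mem_cfPoints_iff.mpr (Or.inr ⟨i, hi, rfl⟩)
  have hP1 : (1:ℝ) ∈ cfPoints α N := mem_cfPoints_iff.mpr (Or.inl rfl)
  have hP0 : (0:ℝ) ∈ cfPoints α N := by
    have := hPt 0 hNpos
    norm_num at this
    exact this
  -- a ∈ gaps
  have hga : a ∈ gaps α N := by
    refine ⟨0, hP0, Int.fract ((mp:ℝ) * α), hPt mp hmpN, ?_, ?_, ?_⟩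
    · rw [← FzN]; exact ha
    · intro z hz
      rcases mem_cfPoints_iff.mp hz with rfl | ⟨i, hiN, rfl⟩
      · right; rw [← FzN]; linarith
      · rcases Nat.eq_zero_or_pos i with rfl | hipos
        · left; norm_num
        · right; rw [← FzN, ← FzN]; exact (hch i hipos hiN).1
    · rw [← FzN]; ring
  -- b ∈ gaps
  have hgb : b ∈ gaps α N := by
    refine ⟨Int.fract ((mm:ℝ) * α), hPt mm hmmN, 1, hP1, ?_, ?_, ?_⟩
    · exact Int.fract_lt_one _
    · intro z hz
      rcases mem_cfPoints_iff.mp hz with rfl | ⟨i, hiN, rfl⟩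
      · right; exact le_refl 1
      · left
        rcases Nat.eq_zero_or_pos i with rfl | hipos
        · norm_num
        · rw [← FzN, ← FzN]; exact (hch i hipos hiN).2
    · rw [← FzN, hFmm]; ring
  -- a + b ∈ gaps
  obtain ⟨i, hidef⟩ : ∃ i : ℕ, i = N - mp := ⟨_, rfl⟩
  obtain ⟨j3, hjdef⟩ : ∃ j : ℕ, j = N - mm := ⟨_, rfl⟩
  have hi1 : 1 ≤ i := by omega
  have hiN : i < N := by omega
  have hj1 : 1 ≤ j3 := by omega
  have hjN : j3 < N := by omega
  have himm : i < mm := by omega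
  have hiR : (i:ℝ) = (N:ℝ) - mp := by rw [hidef]; rw [Nat.cast_sub hmpN.le]
  have hjR : (j3:ℝ) = (N:ℝ) - mm := by rw [hjdef]; rw [Nat.cast_sub hmmN.le]
  set x := Fz α (i:ℤ) with hxdef
  have hchx := hch i hi1 hiN
  have hxpos : 0 ≤ x := Fz_nonneg _
  have hSub1 : x + a + b < 1 := by
    by_contra hge
    push_neg at hge
    obtain ⟨k', hkdef⟩ : ∃ k : ℕ, k = mm - i := ⟨_, rfl⟩
    have hk1 : 1 ≤ k' := by omega
    have hkN : k' < N := by omega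
    have hkR : (k':ℝ) = (mm:ℝ) - i := by rw [hkdef]; rw [Nat.cast_sub himm.le]
    have hFk : Fz α (k':ℤ) = Fz α (mm:ℤ) - x := by
      apply Fz_eq_of (by linarith [hchx.2]) (by linarith [Fz_lt_one (α := α) (mm:ℤ)])
        (⌊((mm:ℝ)) * α⌋ - ⌊((i:ℝ)) * α⌋)
      have e1 : Fz α (mm:ℤ) = (mm:ℝ) * α - ⌊(mm:ℝ) * α⌋ := by
        rw [Fz_as_sub]; push_cast; ring
      have e2 : x = (i:ℝ) * α - ⌊(i:ℝ) * α⌋ := by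
        rw [hxdef, Fz_as_sub]; push_cast; ring
      rw [e1, e2]
      push_cast [hkR]
      ring
    have hge' : Fz α (k':ℤ) ≤ a := by rw [hFk, hFmm]; linarith
    have hle' : a ≤ Fz α (k':ℤ) := (hch k' hk1 hkN).1
    have heq : Fz α (k':ℤ) = Fz α (mp:ℤ) := le_antisymm hge' hle'
    have : (k':ℤ) = (mp:ℤ) := Fz_inj hirr heq
    have : k' = mp := by exact_mod_cast this
    omega
  have hy : Int.fract ((j3:ℝ) * α) = x + a + b := by
    rw [← FzN]
    apply Fz_eq_of (by linarith) hSub1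
      (⌊((i:ℝ)) * α⌋ + ⌊((mp:ℝ)) * α⌋ - ⌊((mm:ℝ)) * α⌋ - 1)
    have e1 : x = (i:ℝ) * α - ⌊(i:ℝ) * α⌋ := by
      rw [hxdef, Fz_as_sub]; push_cast; ring
    have e2 : a = (mp:ℝ) * α - ⌊(mp:ℝ) * α⌋ := by
      rw [hadef, Fz_as_sub]; push_cast; ring
    have e3 : b = 1 - ((mm:ℝ) * α - ⌊(mm:ℝ) * α⌋) := by
      rw [hbdef, Fz_as_sub]; push_cast; ring
    rw [e1, e2, e3]
    push_cast [hjR, hiR]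
    ring
  have hgab : a + b ∈ gaps α N := by
    refine ⟨Int.fract ((i:ℝ) * α), hPt i hiN, Int.fract ((j3:ℝ) * α), hPt j3 hjN, ?_, ?_, ?_⟩
    · rw [hy, ← FzN, ← hxdef]; linarith
    · intro z hz
      rcases mem_cfPoints_iff.mp hz with rfl | ⟨jj, hjjN, rfl⟩
      · right; rw [hy]; linarith
      · rcases Nat.eq_zero_or_pos jj with rfl | hjjpos
        · left
          norm_num
        · -- main case
          by_contra hcon
          push_neg at hcon
          obtain ⟨hgt1, hgt2⟩ := hcon
          rw [hy] at hgt2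
          rw [← FzN, ← FzN] at hgt1
          rw [← FzN] at hgt2
          -- x < Fz jj < x + a + b
          set z' := Fz α (jj:ℤ) with hzdef
          have hzx : x < z' := hgt1
          have hzy : z' < x + a + b := hgt2
          have hjji : jj ≠ i := by
            intro hc
            rw [hc] at hzdef
            rw [hzdef] at hzx
            exact lt_irrefl _ hzx
          rcases Nat.lt_or_ge jj i with hlt | hge
          · -- jj < i : kk = i - jj
            obtain ⟨kk, hkkdef⟩ : ∃ k : ℕ, k = i - jj := ⟨_, rfl⟩
            have hkk1 : 1 ≤ kk := by omega
            have hkkN : kk < N := by omega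
            have hkkmm : kk < mm := by omega
            have hkkR : (kk:ℝ) = (i:ℝ) - jj := by rw [hkkdef]; rw [Nat.cast_sub hlt.le]
            have hFkk : Fz α (kk:ℤ) = 1 - (z' - x) := by
              apply Fz_eq_of (by linarith) (by linarith)
                (⌊((i:ℝ)) * α⌋ - ⌊((jj:ℝ)) * α⌋ - 1)
              have e1 : x = (i:ℝ) * α - ⌊(i:ℝ) * α⌋ := by
                rw [hxdef, Fz_as_sub]; push_cast; ring
              have e2 : z' = (jj:ℝ) * α - ⌊(jj:ℝ) * α⌋ := by
                rw [hzdef, Fz_as_sub]; push_cast; ring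
              rw [e1, e2]
              push_cast [hkkR]
              ring
            have hkklt : Fz α (kk:ℤ) < Fz α (mm:ℤ) := by
              rcases lt_or_eq_of_le (hch kk hkk1 hkkN).2 with h | h
              · exact h
              · exfalso
                have : (kk:ℤ) = (mm:ℤ) := Fz_inj hirr h
                have : kk = mm := by exact_mod_cast this
                omega
            obtain ⟨w', hwdef⟩ : ∃ w : ℕ, w = mm - kk := ⟨_, rfl⟩
            have hw1 : 1 ≤ w' := by omega
            have hwN : w' < N := by omega
            have hwR : (w':ℝ) = (mm:ℝ) - kk := by rw [hwdef]; rw [Nat.cast_sub hkkmm.le]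
            have hFw : Fz α (w':ℤ) = Fz α (mm:ℤ) - Fz α (kk:ℤ) := by
              apply Fz_eq_of (by linarith) (by linarith [Fz_lt_one (α := α) (mm:ℤ), Fz_pos hirr (show (kk:ℤ) ≠ 0 by exact_mod_cast Nat.one_le_iff_ne_zero.mp hkk1)])
                (⌊((mm:ℝ)) * α⌋ - ⌊((kk:ℝ)) * α⌋)
              have e1 : Fz α (mm:ℤ) = (mm:ℝ) * α - ⌊(mm:ℝ) * α⌋ := by
                rw [Fz_as_sub]; push_cast; ring
              have e2 : Fz α (kk:ℤ) = (kk:ℝ) * α - ⌊(kk:ℝ) * α⌋ := by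
                rw [Fz_as_sub]; push_cast; ring
              rw [e1, e2]
              push_cast [hwR]
              ring
            have : Fz α (w':ℤ) < a := by
              rw [hFw, hFmm, hFkk]
              linarith
            linarith [(hch w' hw1 hwN).1]
          · -- jj > i : w = jj - i
            have hgt : i < jj := by omega
            obtain ⟨w, hwdef⟩ : ∃ w : ℕ, w = jj - i := ⟨_, rfl⟩
            have hw1 : 1 ≤ w := by omega
            have hwmp : w < mp := by omega
            have hwN : w < N := by omega
            have hwR : (w:ℝ) = (jj:ℝ) - i := by rw [hwdef]; rw [Nat.cast_sub hgt.le]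
            have hFw : Fz α (w:ℤ) = z' - x := by
              apply Fz_eq_of (by linarith) (by linarith)
                (⌊((jj:ℝ)) * α⌋ - ⌊((i:ℝ)) * α⌋)
              have e1 : x = (i:ℝ) * α - ⌊(i:ℝ) * α⌋ := by
                rw [hxdef, Fz_as_sub]; push_cast; ring
              have e2 : z' = (jj:ℝ) * α - ⌊(jj:ℝ) * α⌋ := by
                rw [hzdef, Fz_as_sub]; push_cast; ring
              rw [e1, e2]
              push_cast [hwR]
              ring
            have hwa : a < Fz α (w:ℤ) := by
              rcases lt_or_eq_of_le (hch w hw1 hwN).1 with h | h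
              · exact h
              · exfalso
                have : (mp:ℤ) = (w:ℤ) := Fz_inj hirr h
                have : mp = w := by exact_mod_cast this
                omega
            have hwab : Fz α (w:ℤ) < a + b := by rw [hFw]; linarith
            obtain ⟨w', hw'def⟩ : ∃ w' : ℕ, w' = mp - w := ⟨_, rfl⟩
            have hw'1 : 1 ≤ w' := by omega
            have hw'N : w' < N := by omega
            have hw'R : (w':ℝ) = (mp:ℝ) - w := by rw [hw'def]; rw [Nat.cast_sub hwmp.le]
            have hFw' : Fz α (w':ℤ) = 1 + a - Fz α (w:ℤ) := by
              apply Fz_eq_of (by linarith [Fz_lt_one (α := α) (w:ℤ)]) (by linarith)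
                (⌊((mp:ℝ)) * α⌋ - ⌊((w:ℝ)) * α⌋ - 1)
              have e1 : a = (mp:ℝ) * α - ⌊(mp:ℝ) * α⌋ := by
                rw [hadef, Fz_as_sub]; push_cast; ring
              have e2 : Fz α (w:ℤ) = (w:ℝ) * α - ⌊(w:ℝ) * α⌋ := by
                rw [Fz_as_sub]; push_cast; ring
              rw [e1, e2]
              push_cast [hw'R]
              ring
            have : 1 - b < Fz α (w':ℤ) := by rw [hFw']; linarith
            have := (hch w' hw'1 hw'N).2
            rw [hFmm] at this
            linarith
    · rw [hy, ← FzN, ← hxdef]; ring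
  -- distinctness
  have hab : a ≠ b := by
    intro heq
    have hsum0 : Fz α (mp:ℤ) + Fz α (mm:ℤ) = 1 := by rw [← hadef, hFmm, ← heq]; ring
    have hne : ((mp:ℤ) + mm) ≠ 0 := by positivity
    apply (Fz_irrat hirr hne).ne_int (⌊((mp:ℝ)) * α⌋ + ⌊((mm:ℝ)) * α⌋ + 1)
    have e1 : Fz α (mp:ℤ) = (mp:ℝ) * α - ⌊(mp:ℝ) * α⌋ := by
      rw [Fz_as_sub]; push_cast; ring
    have e2 : Fz α (mm:ℤ) = (mm:ℝ) * α - ⌊(mm:ℝ) * α⌋ := by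
      rw [Fz_as_sub]; push_cast; ring
    rw [e1, e2] at hsum0
    push_cast
    linarith
  -- conclude
  have hsub : ({a, b, a + b} : Set ℝ) ⊆ gaps α N := by
    rintro d (rfl | rfl | rfl)
    · exact hga
    · exact hgb
    · exact hgab
  have h3 : ({a, b, a + b} : Set ℝ).ncard = 3 := by
    apply Set.ncard_eq_three.mpr
    exact ⟨a, b, a + b, hab, by intro h; linarith, by intro h; linarith, rfl⟩
  have hle := Set.ncard_le_ncard hsub (gaps_finite α N)
  rw [h3] at hle
  omega


lemma cfQ_eq (α : ℝ) : ∀ n, cfQ α n = qq α (n+1) := by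
  intro n
  induction n using Nat.strong_induction_on with
  | _ n ih =>
    match n with
    | 0 => simp [cfQ, qq]
    | 1 => simp [cfQ, qq]
    | (n+2) =>
      rw [show cfQ α (n+2) = cfA α (n+2) * cfQ α (n+1) + cfQ α n from rfl,
        ih (n+1) (by omega), ih n (by omega)]
      rfl

lemma block_exists (hirr : Irrational α) (h0 : 0 < α) (h1 : α < 1) (N : ℕ) (hN : 2 ≤ N) :
    ∃ k m : ℕ, 1 ≤ m ∧ m ≤ cfA α (k+1) ∧ m * qq α (k+1) + qq α k < N ∧
      N ≤ (m+1) * qq α (k+1) + qq α k := by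
  classical
  have hs : ∀ k, qq α (k+1) + qq α k ≥ k + 1 := by
    intro k
    induction k with
    | zero =>
        have e1 : qq α (0+1) = 1 := rfl
        have e0 : qq α 0 = 0 := rfl
        omega
    | succ n ih =>
      have hq := qq_pos hirr h0 h1 n
      have h1' : qq α (n+1+1) ≥ qq α (n+1) + qq α n := by
        have he : qq α (n+1+1) = cfA α (n+1) * qq α (n+1) + qq α n := rfl
        have hA := cfA_pos hirr h0 h1 n
        nlinarith
      omega
  obtain ⟨k, hkdef⟩ : ∃ k, k = Nat.findGreatest (fun k => qq α (k+1) + qq α k < N) N :=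
    ⟨_, rfl⟩
  have hP0 : qq α (0+1) + qq α 0 < N := by
    have e1 : qq α (0+1) = 1 := rfl
    have e0 : qq α 0 = 0 := rfl
    omega
  have hPk : qq α (k+1) + qq α k < N := by
    rw [hkdef]
    exact Nat.findGreatest_spec (P := fun k => qq α (k+1) + qq α k < N) (Nat.zero_le N) hP0
  have hk1 : k ≤ N := by rw [hkdef]; exact Nat.findGreatest_le N
  have hkN : k < N := by
    by_contra hc
    push_neg at hc
    have := hs k
    omega
  have hnot : ¬ (qq α (k+1+1) + qq α (k+1) < N) := by
    apply Nat.findGreatest_is_greatest (P := fun k => qq α (k+1) + qq α k < N)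
      (n := N) (by omega) (by omega)
  push_neg at hnot
  have hA := cfA_pos hirr h0 h1 k
  have hQ1 := qq_pos hirr h0 h1 k
  have hq2eq : qq α (k+1+1) = cfA α (k+1) * qq α (k+1) + qq α k := rfl
  obtain ⟨m, hmdef⟩ : ∃ m, m = Nat.findGreatest
      (fun m => m * qq α (k+1) + qq α k < N) (cfA α (k+1)) := ⟨_, rfl⟩
  have hP'1 : 1 * qq α (k+1) + qq α k < N := by rw [one_mul]; omega
  have hm1 : 1 ≤ m := by
    rw [hmdef]
    exact Nat.le_findGreatest (P := fun m => m * qq α (k+1) + qq α k < N) hA hP'1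
  have hmA : m ≤ cfA α (k+1) := by rw [hmdef]; exact Nat.findGreatest_le _
  have hPm : m * qq α (k+1) + qq α k < N := by
    rw [hmdef]
    exact Nat.findGreatest_spec (P := fun m => m * qq α (k+1) + qq α k < N) hA hP'1
  refine ⟨k, m, hm1, hmA, hPm, ?_⟩
  rcases lt_or_eq_of_le hmA with hlt | heq
  · have hnot' : ¬ ((m+1) * qq α (k+1) + qq α k < N) := by
      apply Nat.findGreatest_is_greatest (P := fun m => m * qq α (k+1) + qq α k < N)
        (n := cfA α (k+1)) (by omega) (by omega)
    omega
  · have hcalc : qq α (k+1+1) + qq α (k+1) = (m+1) * qq α (k+1) + qq α k := by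
      rw [hq2eq, ← heq]; ring
    omega

end TwoGapAux

open scoped Classical

open TwoGapAux in
/-- For every `n ≥ 2`, the number of integers `N` with `q₁ < N ≤ qₙ` whose
associated partition of `[0,1]` has exactly two distinct gap lengths is at most
`a₁ + a₂ + ⋯ + aₙ`. -/
theorem two_gap_count_le (α : ℝ) (hirr : Irrational α)
    (h0 : 0 < α) (h1 : α < 1) (n : ℕ) (hn : 2 ≤ n) :
    ((Finset.Ioc (cfQ α 1) (cfQ α n)).filter
        (fun N => (gaps α N).ncard = 2)).card
      ≤ ∑ k ∈ Finset.Icc 1 n, cfA α k := by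
  set T : Finset ((_ : ℕ) × ℕ) :=
    (Finset.range n).sigma (fun k => Finset.Icc 1 (cfA α (k+1))) with hT
  set f : ((_ : ℕ) × ℕ) → ℕ := fun s => (s.2 + 1) * qq α (s.1 + 1) + qq α s.1 with hf
  have hsub : (Finset.Ioc (cfQ α 1) (cfQ α n)).filter (fun N => (gaps α N).ncard = 2) ⊆
      T.image f := by
    intro N hN
    rw [Finset.mem_filter, Finset.mem_Ioc] at hN
    obtain ⟨⟨hN1, hN2⟩, hcard⟩ := hN
    rw [cfQ_eq α 1] at hN1
    rw [cfQ_eq α n] at hN2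
    have hq2 : 1 ≤ qq α (1+1) := qq_pos hirr h0 h1 1
    have hN2' : 2 ≤ N := by omega
    obtain ⟨k, m, hm1, hmA, hblo, hbhi⟩ := block_exists hirr h0 h1 N hN2'
    obtain ⟨mp, mm, hmp1, hmpN, hmm1, hmmN, hsum, hch⟩ :=
      champs hirr h0 h1 k m N hm1 hmA hblo hbhi
    have hNe : N = (m+1) * qq α (k+1) + qq α k := by
      by_contra hne
      have hlt : N < mp + mm := by rw [hsum]; exact lt_of_le_of_ne hbhi hne
      exact ncard_ne_two hirr N mp mm hmp1 hmpN hmm1 hmmN hlt hch hcard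
    have hkn : k < n := by
      by_contra hk
      push_neg at hk
      have hmono : qq α (n+1) ≤ qq α (k+1) := qq_mono hirr h0 h1 (by omega) (by omega)
      have hmq : qq α (k+1) ≤ m * qq α (k+1) := Nat.le_mul_of_pos_left _ (by omega)
      have : qq α (n+1) < N :=
        lt_of_le_of_lt (le_trans hmono (le_trans hmq (Nat.le_add_right _ _))) hblo
      omega
    rw [Finset.mem_image]
    refine ⟨⟨k, m⟩, ?_, hNe.symm⟩
    rw [hT, Finset.mem_sigma, Finset.mem_range, Finset.mem_Icc]
    exact ⟨hkn, hm1, hmA⟩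
  calc ((Finset.Ioc (cfQ α 1) (cfQ α n)).filter (fun N => (gaps α N).ncard = 2)).card
      ≤ (T.image f).card := Finset.card_le_card hsub
    _ ≤ T.card := Finset.card_image_le
    _ = ∑ k ∈ Finset.range n, (Finset.Icc 1 (cfA α (k+1))).card := Finset.card_sigma _ _
    _ = ∑ k ∈ Finset.range n, cfA α (k+1) := by
        apply Finset.sum_congr rfl
        intro k _
        rw [Nat.card_Icc]
        omega
    _ = ∑ k ∈ Finset.Icc 1 n, cfA α k := by
        rw [← Finset.Ico_add_one_right_eq_Icc, Finset.sum_Ico_eq_sum_range]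
        norm_num
        apply Finset.sum_congr rfl
        intro k _
        rw [Nat.add_comm]
end

section
/- For Lebesgue-almost every α ∈ (0,1), lim_{N→∞} (1/N) · #{1 ≤ n ≤ N : the points {0}, {α}, ..., {(n-1)α}, 1 partition [0,1] into exactly two distinct gap lengths} = 0. -/
open Set

open Filter MeasureTheory
open scoped Classical
open scoped ENNReal

noncomputable def ptsF (α : ℝ) (n : ℕ) : Finset ℝ :=
  insert 1 ((Finset.range n).image fun k : ℕ => Int.fract (k * α))

lemma cfPoints_eq_coe (α : ℝ) (n : ℕ) : cfPoints α n = ↑(ptsF α n) := by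
  simp [cfPoints, ptsF, Finset.coe_image, Finset.coe_range]

lemma one_mem_ptsF (α : ℝ) (n : ℕ) : (1:ℝ) ∈ ptsF α n := Finset.mem_insert_self _ _

lemma mem_ptsF_iff {α : ℝ} {n : ℕ} {x : ℝ} :
    x ∈ ptsF α n ↔ x = 1 ∨ ∃ k < n, Int.fract ((k:ℝ) * α) = x := by
  simp [ptsF]

lemma zero_mem_ptsF (α : ℝ) {n : ℕ} (hn : 1 ≤ n) : (0:ℝ) ∈ ptsF α n := by
  rw [mem_ptsF_iff]
  exact Or.inr ⟨0, hn, by simp⟩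

lemma ptsF_nonneg {α : ℝ} {n : ℕ} {x : ℝ} (hx : x ∈ ptsF α n) : 0 ≤ x := by
  rcases mem_ptsF_iff.mp hx with h | ⟨k, _, h⟩
  · simp [h]
  · rw [← h]; exact Int.fract_nonneg _
lemma ptsF_le_one {α : ℝ} {n : ℕ} {x : ℝ} (hx : x ∈ ptsF α n) : x ≤ 1 := by
  rcases mem_ptsF_iff.mp hx with h | ⟨k, _, h⟩
  · simp [h]
  · rw [← h]; exact (Int.fract_lt_one _).le

lemma irr_int_ne {α : ℝ} (h : Irrational α) {m : ℤ} (hm : m ≠ 0) (z : ℤ) :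
    (m:ℝ) * α ≠ (z:ℝ) := by
  intro e
  exact (Irrational.ne_int (Irrational.intCast_mul h hm) z) e

lemma fract_irr_ne_zero {α : ℝ} (h : Irrational α) {m : ℤ} (hm : m ≠ 0) :
    Int.fract ((m:ℝ) * α) ≠ 0 := by
  intro e
  have : (m:ℝ) * α = ((⌊(m:ℝ)*α⌋ : ℤ) : ℝ) := by
    have := Int.fract_add_floor ((m:ℝ)*α)
    rw [e] at this; linarith
  exact irr_int_ne h hm _ this

lemma fract_nat_inj {α : ℝ} (h : Irrational α) {a b : ℕ}
    (hab : Int.fract ((a:ℝ) * α) = Int.fract ((b:ℝ) * α)) : a = b := by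
  by_contra hne
  obtain ⟨z, hz⟩ := Int.fract_eq_fract.mp hab
  have hm : ((a:ℤ) - b) ≠ 0 := by
    intro e; apply hne; exact_mod_cast sub_eq_zero.mp e
  apply irr_int_ne h hm z
  push_cast
  push_cast at hz
  linarith

lemma card_ptsF {α : ℝ} (h : Irrational α) (n : ℕ) : (ptsF α n).card = n + 1 := by
  rw [ptsF, Finset.card_insert_of_notMem, Finset.card_image_of_injOn, Finset.card_range]
  · intro a _ b _ hab
    exact fract_nat_inj h hab
  · intro hmem
    obtain ⟨k, _, hk⟩ := Finset.mem_image.mp hmem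
    exact absurd hk (ne_of_lt (Int.fract_lt_one _))

noncomputable def nxt (α : ℝ) (n : ℕ) (x : ℝ) : ℝ :=
  if h : ((ptsF α n).filter fun y => x < y).Nonempty
  then ((ptsF α n).filter fun y => x < y).min' h else 0

noncomputable def prv (α : ℝ) (n : ℕ) (y : ℝ) : ℝ :=
  if h : ((ptsF α n).filter fun x => x < y).Nonempty
  then ((ptsF α n).filter fun x => x < y).max' h else 0

section nxtprv
variable {α : ℝ} {n : ℕ} {x y : ℝ}

lemma nxt_filt_ne (hx : x ∈ ptsF α n) (hx1 : x ≠ 1) :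
    ((ptsF α n).filter fun y => x < y).Nonempty :=
  ⟨1, Finset.mem_filter.mpr ⟨one_mem_ptsF α n, lt_of_le_of_ne (ptsF_le_one hx) hx1⟩⟩

lemma nxt_mem (hx : x ∈ ptsF α n) (hx1 : x ≠ 1) : nxt α n x ∈ ptsF α n := by
  rw [nxt, dif_pos (nxt_filt_ne hx hx1)]
  exact (Finset.mem_filter.mp (Finset.min'_mem _ _)).1

lemma lt_nxt (hx : x ∈ ptsF α n) (hx1 : x ≠ 1) : x < nxt α n x := by
  rw [nxt, dif_pos (nxt_filt_ne hx hx1)]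
  exact (Finset.mem_filter.mp (Finset.min'_mem _ _)).2

lemma nxt_le (hx : x ∈ ptsF α n) (hx1 : x ≠ 1) {z : ℝ} (hz : z ∈ ptsF α n) (hxz : x < z) :
    nxt α n x ≤ z := by
  rw [nxt, dif_pos (nxt_filt_ne hx hx1)]
  exact Finset.min'_le _ _ (Finset.mem_filter.mpr ⟨hz, hxz⟩)

lemma nxt_cons (hx : x ∈ ptsF α n) (hx1 : x ≠ 1) {z : ℝ} (hz : z ∈ ptsF α n) :
    z ≤ x ∨ nxt α n x ≤ z := by
  rcases le_or_gt z x with h | h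
  · exact Or.inl h
  · exact Or.inr (nxt_le hx hx1 hz h)

lemma prv_filt_ne (hn : 1 ≤ n) (hy : y ∈ ptsF α n) (hy0 : y ≠ 0) :
    ((ptsF α n).filter fun x => x < y).Nonempty :=
  ⟨0, Finset.mem_filter.mpr ⟨zero_mem_ptsF α hn, lt_of_le_of_ne (ptsF_nonneg hy) (Ne.symm hy0)⟩⟩

lemma prv_mem (hn : 1 ≤ n) (hy : y ∈ ptsF α n) (hy0 : y ≠ 0) : prv α n y ∈ ptsF α n := by
  rw [prv, dif_pos (prv_filt_ne hn hy hy0)]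
  exact (Finset.mem_filter.mp (Finset.max'_mem _ (prv_filt_ne hn hy hy0))).1

lemma prv_lt (hn : 1 ≤ n) (hy : y ∈ ptsF α n) (hy0 : y ≠ 0) : prv α n y < y := by
  rw [prv, dif_pos (prv_filt_ne hn hy hy0)]
  exact (Finset.mem_filter.mp (Finset.max'_mem _ (prv_filt_ne hn hy hy0))).2

lemma le_prv (hn : 1 ≤ n) (hy : y ∈ ptsF α n) (hy0 : y ≠ 0) {z : ℝ} (hz : z ∈ ptsF α n)
    (hzy : z < y) : z ≤ prv α n y := by
  rw [prv, dif_pos (prv_filt_ne hn hy hy0)]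
  apply Finset.le_max'
  exact Finset.mem_filter.mpr ⟨hz, hzy⟩

lemma prv_ne_one (hn : 1 ≤ n) (hy : y ∈ ptsF α n) (hy0 : y ≠ 0) : prv α n y ≠ 1 := by
  have h1 := prv_lt hn hy hy0
  have h2 := ptsF_le_one hy
  intro e; rw [e] at h1; linarith

lemma nxt_ne_zero (hx : x ∈ ptsF α n) (hx1 : x ≠ 1) : nxt α n x ≠ 0 := by
  have h1 := lt_nxt hx hx1
  have h2 := ptsF_nonneg hx
  intro e; rw [e] at h1; linarith

lemma nxt_prv (hn : 1 ≤ n) (hy : y ∈ ptsF α n) (hy0 : y ≠ 0) : nxt α n (prv α n y) = y := by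
  have hp := prv_mem hn hy hy0
  have hp1 := prv_ne_one hn hy hy0
  have h1 : nxt α n (prv α n y) ≤ y := nxt_le hp hp1 hy (prv_lt hn hy hy0)
  rcases lt_or_eq_of_le h1 with h | h
  · exfalso
    have := le_prv hn hy hy0 (nxt_mem hp hp1) h
    have := lt_nxt hp hp1
    linarith
  · exact h

lemma prv_nxt (hn : 1 ≤ n) (hx : x ∈ ptsF α n) (hx1 : x ≠ 1) : prv α n (nxt α n x) = x := by
  have hm := nxt_mem hx hx1
  have h0 := nxt_ne_zero hx hx1
  have h1 : x ≤ prv α n (nxt α n x) := le_prv hn hm h0 hx (lt_nxt hx hx1)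
  rcases nxt_cons hx hx1 (prv_mem hn hm h0) with h | h
  · linarith
  · exfalso
    have := prv_lt hn hm h0
    linarith

end nxtprv

lemma gaps_eq_coe (α : ℝ) (n : ℕ) :
    gaps α n = ↑(((ptsF α n).erase 1).image fun x => nxt α n x - x) := by
  ext d
  simp only [gaps, Set.mem_setOf_eq, Finset.coe_image, Set.mem_image, Finset.mem_coe,
    Finset.mem_erase, cfPoints_eq_coe, Finset.mem_coe]
  constructor
  · rintro ⟨x, hx, y, hy, hxy, hcons, rfl⟩
    have hx1 : x ≠ 1 := by
      have := ptsF_le_one hy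
      intro e; rw [e] at hxy; linarith
    refine ⟨x, ⟨hx1, hx⟩, ?_⟩
    have h1 : nxt α n x ≤ y := nxt_le hx hx1 hy hxy
    have h2 : y ≤ nxt α n x := by
      rcases hcons _ (nxt_mem hx hx1) with h | h
      · exfalso; have := lt_nxt hx hx1; linarith
      · exact h
    rw [le_antisymm h1 h2]
  · rintro ⟨x, ⟨hx1, hx⟩, rfl⟩
    exact ⟨x, hx, nxt α n x, nxt_mem hx hx1, lt_nxt hx hx1,
      fun z hz => nxt_cons hx hx1 hz, rfl⟩

lemma sum_gaps_eq_one {α : ℝ} (h : Irrational α) {n : ℕ} (hn : 1 ≤ n) :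
    ∑ x ∈ (ptsF α n).erase 1, (nxt α n x - x) = 1 := by
  have h1 : ∑ x ∈ (ptsF α n).erase 1, nxt α n x = ∑ y ∈ (ptsF α n).erase 0, y := by
    refine Finset.sum_nbij' (fun x => nxt α n x) (fun y => prv α n y) ?_ ?_ ?_ ?_ ?_
    · intro a ha
      obtain ⟨ha1, haF⟩ := Finset.mem_erase.mp ha
      exact Finset.mem_erase.mpr ⟨nxt_ne_zero haF ha1, nxt_mem haF ha1⟩
    · intro a ha
      obtain ⟨ha0, haF⟩ := Finset.mem_erase.mp ha
      exact Finset.mem_erase.mpr ⟨prv_ne_one hn haF ha0, prv_mem hn haF ha0⟩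
    · intro a ha
      obtain ⟨ha1, haF⟩ := Finset.mem_erase.mp ha
      exact prv_nxt hn haF ha1
    · intro a ha
      obtain ⟨ha0, haF⟩ := Finset.mem_erase.mp ha
      exact nxt_prv hn haF ha0
    · intro a _; rfl
  rw [Finset.sum_sub_distrib, h1,
    Finset.sum_erase_eq_sub (zero_mem_ptsF α hn),
    Finset.sum_erase_eq_sub (one_mem_ptsF α n)]
  ring

lemma floor_neg_of_fract_ne_zero {r : ℝ} (h : Int.fract r ≠ 0) : ⌊-r⌋ = -⌊r⌋ - 1 := by
  have e1 : ((⌊-r⌋ : ℤ) : ℝ) = -r - Int.fract (-r) := by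
    have := Int.fract_add_floor (-r); linarith
  rw [Int.fract_neg h] at e1
  have e2 : ((⌊r⌋ : ℤ) : ℝ) = r - Int.fract r := by
    have := Int.fract_add_floor r; linarith
  have : ((⌊-r⌋ : ℤ) : ℝ) = ((-⌊r⌋ - 1 : ℤ) : ℝ) := by push_cast; linarith
  exact_mod_cast this

lemma gap_rep {α : ℝ} (h : Irrational α) {n : ℕ} (hn : 2 ≤ n) {x : ℝ}
    (hx : x ∈ (ptsF α n).erase 1) :
    ∃ m : ℤ, m ≠ 0 ∧ |m| ≤ (n:ℤ) - 1 ∧ nxt α n x - x = Int.fract ((m:ℝ) * α) := by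
  obtain ⟨hx1, hxF⟩ := Finset.mem_erase.mp hx
  obtain ⟨a, ha, hax⟩ : ∃ k < n, Int.fract ((k:ℝ) * α) = x := by
    rcases mem_ptsF_iff.mp hxF with e | e
    · exact absurd e hx1
    · exact e
  have hyF := nxt_mem hxF hx1
  rcases mem_ptsF_iff.mp hyF with hy1 | ⟨b, hb, hby⟩
  · -- nxt x = 1, gap is 1 - x = fract (-a * α)
    have ha0 : a ≠ 0 := by
      intro a0
      have hx0 : x = 0 := by rw [← hax, a0]; simp
      have h1n : 1 < n := hn
      have hfa : Int.fract ((1:ℝ) * α) ∈ ptsF α n := by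
        rw [mem_ptsF_iff]; exact Or.inr ⟨1, h1n, by norm_num⟩
      have hfa0 : Int.fract ((1:ℝ) * α) ≠ 0 := by
        have := fract_irr_ne_zero h (m := 1) (by norm_num)
        simpa using this
      rcases nxt_cons hxF hx1 hfa with hle | hle
      · rw [hx0] at hle
        have := Int.fract_nonneg ((1:ℝ) * α)
        exact hfa0 (le_antisymm hle this)
      · rw [hy1] at hle
        exact absurd hle (not_le.mpr (Int.fract_lt_one _))
    refine ⟨-(a:ℤ), by simpa using ha0, ?_, ?_⟩
    · rw [abs_neg, Int.abs_natCast]; omega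
    · have hfa : Int.fract ((a:ℝ) * α) ≠ 0 := by
        have := fract_irr_ne_zero h (m := (a:ℤ)) (by exact_mod_cast ha0)
        simpa using this
      have : Int.fract (-((a:ℝ) * α)) = 1 - Int.fract ((a:ℝ) * α) := Int.fract_neg hfa
      rw [hy1, ← hax]
      push_cast
      rw [neg_mul, this]
  · -- nxt x = fract (b α)
    have hne : b ≠ a := by
      intro e
      have := lt_nxt hxF hx1
      rw [← hby, e, hax] at this
      exact lt_irrefl _ this
    refine ⟨(b:ℤ) - a, by omega, by rw [abs_sub_le_iff]; omega, ?_⟩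
    rw [eq_comm, Int.fract_eq_iff]
    have hlt := lt_nxt hxF hx1
    refine ⟨by linarith, ?_, ⟨⌊(b:ℝ)*α⌋ - ⌊(a:ℝ)*α⌋, ?_⟩⟩
    · have : nxt α n x < 1 := by rw [← hby]; exact Int.fract_lt_one _
      have : 0 ≤ x := ptsF_nonneg hxF
      linarith
    · rw [← hby, ← hax]
      have e1 := Int.fract_add_floor ((a:ℝ)*α)
      have e2 := Int.fract_add_floor ((b:ℝ)*α)
      push_cast
      linarith

lemma gaps_one (α : ℝ) : gaps α 1 = {1} := by
  have hpts : cfPoints α 1 = {1, 0} := by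
    ext z
    simp only [cfPoints, Set.mem_insert_iff, Set.mem_image, Set.mem_Iio,
      Set.mem_singleton_iff]
    constructor
    · rintro (h | ⟨k, hk, e⟩)
      · exact Or.inl h
      · have : k = 0 := by omega
        subst this
        right; rw [← e]; simp
    · rintro (h | h)
      · exact Or.inl h
      · exact Or.inr ⟨0, by norm_num, by rw [h]; simp⟩
  ext d
  simp only [gaps, hpts, Set.mem_setOf_eq, Set.mem_insert_iff, Set.mem_singleton_iff]
  constructor
  · rintro ⟨x, hx, y, hy, hxy, _, rfl⟩
    rcases hx with rfl | rfl <;> rcases hy with rfl | rfl <;> linarith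
  · rintro rfl
    exact ⟨0, Or.inr rfl, 1, Or.inl rfl, by norm_num,
      by rintro z (rfl | rfl) <;> norm_num, by norm_num⟩

lemma helper_min {n c1 c2 : ℕ} (hc12 : c1 + c2 = n) (hn : 0 < n) {d1 d2 : ℝ}
    (hsum : (c1:ℝ) * d1 + (c2:ℝ) * d2 = 1) (hle : d1 ≤ d2) : d1 ≤ 1 / n := by
  have hnR : (0:ℝ) < n := by exact_mod_cast hn
  have hcast : (c1:ℝ) + c2 = n := by exact_mod_cast hc12
  have e2 : (c2:ℝ) * d1 ≤ (c2:ℝ) * d2 := by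
    apply mul_le_mul_of_nonneg_left hle (by positivity)
  have h9 : (n:ℝ) * d1 ≤ 1 := by
    have e : (n:ℝ) * d1 = (c1:ℝ) * d1 + (c2:ℝ) * d1 := by rw [← hcast]; ring
    linarith
  rw [le_div_iff₀ hnR]
  linarith

lemma main_det {α : ℝ} (h : Irrational α) {n : ℕ} (hn : 2 ≤ n)
    (h2 : (gaps α n).ncard = 2) :
    ∃ c1 c2 : ℕ, 0 < c1 ∧ 0 < c2 ∧ c1 + c2 = n ∧
      (c1:ℤ) * ⌊(c2:ℝ) * α⌋ - (c2:ℤ) * ⌊(c1:ℝ) * α⌋ = (c2:ℤ) - 1 ∧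
      (Int.fract ((c2:ℝ) * α) ≤ 1/n ∨ 1 - Int.fract ((c1:ℝ) * α) ≤ 1/n) := by
  classical
  set s : Finset ℝ := (ptsF α n).erase 1 with hs
  set G : Finset ℝ := s.image fun x => nxt α n x - x with hGdef
  have hGcard : G.card = 2 := by
    rw [gaps_eq_coe, Set.ncard_coe_finset] at h2
    exact h2
  obtain ⟨d1, d2, hd12, hGeq⟩ := Finset.card_eq_two.mp hGcard
  have hval : ∀ x ∈ s, nxt α n x - x = d1 ∨ nxt α n x - x = d2 := by
    intro x hxs
    have : nxt α n x - x ∈ G := Finset.mem_image_of_mem _ hxs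
    rw [hGeq] at this
    simpa using this
  set s1 : Finset ℝ := s.filter (fun x => nxt α n x - x = d1) with hs1
  set s2 : Finset ℝ := s.filter (fun x => ¬(nxt α n x - x = d1)) with hs2
  set c1 : ℕ := s1.card
  set c2 : ℕ := s2.card
  have hscard : s.card = n := by
    rw [hs, Finset.card_erase_of_mem (one_mem_ptsF α n), card_ptsF h]
    omega
  have hc12 : c1 + c2 = n := by
    rw [← hscard]
    exact Finset.card_filter_add_card_filter_not _
  have hd1G : d1 ∈ G := by rw [hGeq]; simp
  have hd2G : d2 ∈ G := by rw [hGeq]; simp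
  obtain ⟨x1, hx1s, hx1⟩ := Finset.mem_image.mp hd1G
  obtain ⟨x2, hx2s, hx2⟩ := Finset.mem_image.mp hd2G
  have hc1 : 0 < c1 := Finset.card_pos.mpr ⟨x1, Finset.mem_filter.mpr ⟨hx1s, hx1⟩⟩
  have hc2 : 0 < c2 := Finset.card_pos.mpr ⟨x2, Finset.mem_filter.mpr ⟨hx2s, by rw [hx2]; exact hd12.symm⟩⟩
  -- the sum identity
  have hsum : (c1:ℝ) * d1 + (c2:ℝ) * d2 = 1 := by
    have := sum_gaps_eq_one h (by omega : 1 ≤ n)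
    rw [← Finset.sum_filter_add_sum_filter_not s (fun x => nxt α n x - x = d1)] at this
    have e1 : ∑ x ∈ s1, (nxt α n x - x) = (c1:ℝ) * d1 := by
      rw [Finset.sum_congr rfl (fun x hx => (Finset.mem_filter.mp hx).2)]
      rw [Finset.sum_const, nsmul_eq_mul]
    have e2 : ∑ x ∈ s2, (nxt α n x - x) = (c2:ℝ) * d2 := by
      have : ∀ x ∈ s2, nxt α n x - x = d2 := by
        intro x hx
        obtain ⟨hxs, hxne⟩ := Finset.mem_filter.mp hx
        rcases hval x hxs with e | e
        · exact absurd e hxne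
        · exact e
      rw [Finset.sum_congr rfl this]
      rw [Finset.sum_const, nsmul_eq_mul]
    rw [e1, e2] at this
    exact this
  -- representations
  obtain ⟨m1, hm10, hm1b, hm1⟩ := gap_rep h hn hx1s
  obtain ⟨m2, hm20, hm2b, hm2⟩ := gap_rep h hn hx2s
  rw [hx1] at hm1
  rw [hx2] at hm2
  -- d1 = fract(m1 α), d2 = fract(m2 α)
  have hf1 := Int.fract_add_floor ((m1:ℝ) * α)
  have hf2 := Int.fract_add_floor ((m2:ℝ) * α)
  set A : ℤ := c1 * m1 + c2 * m2 with hA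
  set B : ℤ := c1 * ⌊(m1:ℝ)*α⌋ + c2 * ⌊(m2:ℝ)*α⌋ with hB
  have hreal : (A:ℝ) * α = 1 + (B:ℝ) := by
    rw [hA, hB]
    push_cast
    have e1 : d1 = (m1:ℝ)*α - ⌊(m1:ℝ)*α⌋ := by rw [hm1]; linarith
    have e2 : d2 = (m2:ℝ)*α - ⌊(m2:ℝ)*α⌋ := by rw [hm2]; linarith
    rw [e1, e2] at hsum
    linear_combination hsum
  have hA0 : A = 0 := by
    by_contra hA0
    exact irr_int_ne h hA0 (1 + B) (by rw [hreal]; push_cast; ring)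
  have hB1 : B = -1 := by
    rw [hA0] at hreal
    have : (B:ℝ) = -1 := by push_cast at hreal; linarith
    exact_mod_cast this
  -- coprimality
  have hcop : IsCoprime (c1:ℤ) (c2:ℤ) := by
    rw [Int.isCoprime_iff_gcd_eq_one]
    have hdvd : (Int.gcd (c1:ℤ) (c2:ℤ) : ℤ) ∣ B := by
      rw [hB]
      exact dvd_add (Dvd.dvd.mul_right (Int.gcd_dvd_left _ _) _) (Dvd.dvd.mul_right (Int.gcd_dvd_right _ _) _)
    rw [hB1] at hdvd
    have : (Int.gcd (c1:ℤ) (c2:ℤ) : ℤ) ∣ 1 := (dvd_neg.mp (by simpa using hdvd.neg_right))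
    exact_mod_cast Int.eq_one_of_dvd_one (by positivity) this
  -- m1 = c2 * t, m2 = -(c1 * t)
  have hdvd : (c2:ℤ) ∣ m1 := by
    have h1 : (c2:ℤ) ∣ (c1:ℤ) * m1 := by
      have hAe : (c1:ℤ) * m1 + (c2:ℤ) * m2 = 0 := by rw [← hA]; exact hA0
      have : (c1:ℤ) * m1 = -((c2:ℤ) * m2) := by linarith
      rw [this]
      exact Dvd.dvd.neg_right (Dvd.intro _ rfl)
    exact (hcop.symm).dvd_of_dvd_mul_left h1
  obtain ⟨t, ht⟩ := hdvd
  have hm2t : m2 = -((c1:ℤ) * t) := by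
    have hc2z : (c2:ℤ) ≠ 0 := by exact_mod_cast hc2.ne'
    have hAe : (c1:ℤ) * m1 + (c2:ℤ) * m2 = 0 := by rw [← hA]; exact hA0
    rw [ht] at hAe
    have : (c2:ℤ) * ((c1:ℤ) * t + m2) = 0 := by linear_combination hAe
    have := mul_eq_zero.mp this
    rcases this with e | e
    · exact absurd e hc2z
    · linarith
  have ht0 : t ≠ 0 := by
    intro e; rw [e, mul_zero] at ht; exact hm10 ht
  have habs : |t| = 1 := by
    have h1 : |m1| = (c2:ℤ) * |t| := by rw [ht, abs_mul, Int.abs_natCast]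
    have h2 : |m2| = (c1:ℤ) * |t| := by rw [hm2t, abs_neg, abs_mul, Int.abs_natCast]
    have h3 : 1 ≤ |t| := by
      rcases abs_pos.mpr ht0 with h'
      omega
    rw [h1] at hm1b; rw [h2] at hm2b
    have h5 : ((c1:ℤ) + c2) = n := by exact_mod_cast hc12
    by_contra habs'
    have h6 : 2 ≤ |t| := by omega
    have h7 : ((c1:ℤ) + c2) * |t| ≤ 2 * (n:ℤ) - 2 := by rw [add_mul]; omega
    rw [h5] at h7
    have h8 : 2 * (n:ℤ) ≤ (n:ℤ) * |t| := by nlinarith [(by omega : (0:ℤ) ≤ (n:ℤ))]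
    omega
  have hfr1 : Int.fract ((c1:ℝ) * α) ≠ 0 := by
    have := fract_irr_ne_zero h (m := (c1:ℤ)) (by exact_mod_cast hc1.ne')
    simpa using this
  have hfr2 : Int.fract ((c2:ℝ) * α) ≠ 0 := by
    have := fract_irr_ne_zero h (m := (c2:ℤ)) (by exact_mod_cast hc2.ne')
    simpa using this
  have hnR : (0:ℝ) < n := by exact_mod_cast (by omega : 0 < n)
  rcases (abs_eq (by norm_num : (0:ℤ) ≤ 1)).mp habs with ht1 | ht1
  · -- t = 1 : m1 = c2, m2 = -c1
    rw [ht1, mul_one] at ht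
    rw [ht1] at hm2t
    rw [mul_one] at hm2t
    have hd1e : d1 = Int.fract ((c2:ℝ) * α) := by rw [hm1, ht]; norm_num
    have hd2e : d2 = 1 - Int.fract ((c1:ℝ) * α) := by
      rw [hm2, hm2t]
      push_cast
      rw [neg_mul, Int.fract_neg hfr1]
    have hfloor : ⌊(m2:ℝ) * α⌋ = -⌊(c1:ℝ)*α⌋ - 1 := by
      rw [hm2t]
      push_cast
      rw [neg_mul]
      exact floor_neg_of_fract_ne_zero hfr1
    refine ⟨c1, c2, hc1, hc2, hc12, ?_, ?_⟩
    · have : (c1:ℤ) * ⌊(c2:ℝ)*α⌋ + (c2:ℤ) * (-⌊(c1:ℝ)*α⌋ - 1) = -1 := by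
        rw [← hfloor, ← hB1, hB, ht]
        push_cast
        ring
      linarith
    · rcases le_or_gt d1 d2 with hle | hle
      · left
        rw [← hd1e]
        exact helper_min hc12 (by omega) hsum hle
      · right
        rw [← hd2e]
        have hsum' : (c2:ℝ) * d2 + (c1:ℝ) * d1 = 1 := by linarith
        exact helper_min (by omega : c2 + c1 = n) (by omega) hsum' hle.le
  · -- t = -1 : m1 = -c2, m2 = c1
    rw [ht1] at ht hm2t
    rw [mul_neg_one] at ht
    have hm2c : m2 = c1 := by rw [hm2t]; ring
    have hd2e : d2 = Int.fract ((c1:ℝ) * α) := by rw [hm2, hm2c]; norm_num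
    have hd1e : d1 = 1 - Int.fract ((c2:ℝ) * α) := by
      rw [hm1, ht]
      push_cast
      rw [neg_mul, Int.fract_neg hfr2]
    have hfloor : ⌊(m1:ℝ) * α⌋ = -⌊(c2:ℝ)*α⌋ - 1 := by
      rw [ht]
      push_cast
      rw [neg_mul]
      exact floor_neg_of_fract_ne_zero hfr2
    refine ⟨c2, c1, hc2, hc1, by omega, ?_, ?_⟩
    · have : (c1:ℤ) * (-⌊(c2:ℝ)*α⌋ - 1) + (c2:ℤ) * ⌊(c1:ℝ)*α⌋ = -1 := by
        rw [← hfloor, ← hB1, hB, hm2c]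
        push_cast
        ring
      linarith
    · rcases le_or_gt d2 d1 with hle | hle
      · left
        rw [← hd2e]
        have hsum' : (c2:ℝ) * d2 + (c1:ℝ) * d1 = 1 := by linarith
        exact helper_min (by omega : c2 + c1 = n) (by omega) hsum' hle
      · right
        rw [← hd1e]
        exact helper_min hc12 (by omega) hsum hle.le

noncomputable def badSet (n : ℕ) : Set ℝ :=
  {β | ∃ c1 c2 : ℕ, 0 < c1 ∧ 0 < c2 ∧ c1 + c2 = n ∧
    (c1:ℤ) * ⌊(c2:ℝ) * β⌋ - (c2:ℤ) * ⌊(c1:ℝ) * β⌋ = (c2:ℤ) - 1 ∧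
    (Int.fract ((c2:ℝ) * β) ≤ 1/n ∨ 1 - Int.fract ((c1:ℝ) * β) ≤ 1/n)}

lemma measurable_floor_mul (c : ℕ) : Measurable fun β : ℝ => ⌊(c:ℝ) * β⌋ :=
  Int.measurable_floor.comp (measurable_id.const_mul _)

lemma measurable_fract_mul (c : ℕ) : Measurable fun β : ℝ => Int.fract ((c:ℝ) * β) :=
  measurable_fract.comp (measurable_id.const_mul _)

lemma badSet_measurable (n : ℕ) : MeasurableSet (badSet n) := by
  have : badSet n = ⋃ c1 : ℕ, ⋃ c2 : ℕ,
      {β : ℝ | 0 < c1 ∧ 0 < c2 ∧ c1 + c2 = n ∧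
        (c1:ℤ) * ⌊(c2:ℝ) * β⌋ - (c2:ℤ) * ⌊(c1:ℝ) * β⌋ = (c2:ℤ) - 1 ∧
        (Int.fract ((c2:ℝ) * β) ≤ 1/n ∨ 1 - Int.fract ((c1:ℝ) * β) ≤ 1/n)} := by
    ext β; simp [badSet]
  rw [this]
  refine MeasurableSet.iUnion fun c1 => MeasurableSet.iUnion fun c2 => ?_
  by_cases hc : 0 < c1 ∧ 0 < c2 ∧ c1 + c2 = n
  · have he : {β : ℝ | 0 < c1 ∧ 0 < c2 ∧ c1 + c2 = n ∧
        (c1:ℤ) * ⌊(c2:ℝ) * β⌋ - (c2:ℤ) * ⌊(c1:ℝ) * β⌋ = (c2:ℤ) - 1 ∧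
        (Int.fract ((c2:ℝ) * β) ≤ 1/n ∨ 1 - Int.fract ((c1:ℝ) * β) ≤ 1/n)} =
        ((fun β : ℝ => (c1:ℤ) * ⌊(c2:ℝ) * β⌋ - (c2:ℤ) * ⌊(c1:ℝ) * β⌋) ⁻¹' {(c2:ℤ) - 1}) ∩
        (((fun β : ℝ => Int.fract ((c2:ℝ) * β)) ⁻¹' Set.Iic (1/n)) ∪
         ((fun β : ℝ => Int.fract ((c1:ℝ) * β)) ⁻¹' Set.Ici (1 - 1/n))) := by
      ext β
      simp only [Set.mem_setOf_eq, Set.mem_inter_iff, Set.mem_preimage, Set.mem_singleton_iff,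
        Set.mem_union, Set.mem_Iic, Set.mem_Ici]
      constructor
      · rintro ⟨_, _, _, h1, h2⟩
        refine ⟨h1, ?_⟩
        rcases h2 with h | h
        · exact Or.inl h
        · exact Or.inr (by linarith)
      · rintro ⟨h1, h2⟩
        refine ⟨hc.1, hc.2.1, hc.2.2, h1, ?_⟩
        rcases h2 with h | h
        · exact Or.inl h
        · exact Or.inr (by linarith)
    rw [he]
    refine MeasurableSet.inter ?_ (MeasurableSet.union ?_ ?_)
    · exact (((measurable_floor_mul c2).const_mul _).sub ((measurable_floor_mul c1).const_mul _))
        (MeasurableSet.singleton _)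
    · exact (measurable_fract_mul c2) measurableSet_Iic
    · exact (measurable_fract_mul c1) measurableSet_Ici
  · convert MeasurableSet.empty
    ext β
    simp only [Set.mem_setOf_eq, Set.mem_empty_iff_false, iff_false]
    rintro ⟨h1, h2, h3, -, -⟩
    exact hc ⟨h1, h2, h3⟩

noncomputable def setU (n c : ℕ) : Set ℝ :=
  {β ∈ Set.Ioo (0:ℝ) 1 | ((n-c:ℕ):ℤ) * ⌊(c:ℝ) * β⌋ - (c:ℤ) * ⌊((n-c:ℕ):ℝ) * β⌋ = (c:ℤ) - 1 ∧
    Int.fract ((c:ℝ) * β) ≤ 1/n}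

noncomputable def setV (n c : ℕ) : Set ℝ :=
  {β ∈ Set.Ioo (0:ℝ) 1 | ((n-c:ℕ):ℤ) * ⌊(c:ℝ) * β⌋ - (c:ℤ) * ⌊((n-c:ℕ):ℝ) * β⌋ = (c:ℤ) - 1 ∧
    1 - Int.fract (((n-c:ℕ):ℝ) * β) ≤ 1/n}

lemma floor_bounds {c : ℕ} (hc : 0 < c) {β : ℝ} (hβ : β ∈ Set.Ioo (0:ℝ) 1) :
    0 ≤ ⌊(c:ℝ) * β⌋ ∧ ⌊(c:ℝ) * β⌋ < c := by
  have hcR : (0:ℝ) < c := by exact_mod_cast hc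
  constructor
  · apply Int.floor_nonneg.mpr
    nlinarith [hβ.1]
  · have : (c:ℝ) * β < c := by nlinarith [hβ.2]
    exact_mod_cast Int.floor_lt.mpr (by push_cast; linarith)

lemma pin_coprime {n c : ℕ} (hc1 : 1 ≤ c) (hc2 : c < n) {I J I₀ J₀ : ℤ}
    (h : ((n-c:ℕ):ℤ) * I - (c:ℤ) * J = (c:ℤ) - 1)
    (h₀ : ((n-c:ℕ):ℤ) * I₀ - (c:ℤ) * J₀ = (c:ℤ) - 1)
    (hI : 0 ≤ I ∧ I < c) (hI₀ : 0 ≤ I₀ ∧ I₀ < c)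
    (hJ : 0 ≤ J ∧ J < (n-c:ℕ)) (hJ₀ : 0 ≤ J₀ ∧ J₀ < (n-c:ℕ)) :
    I = I₀ ∧ J = J₀ := by
  set c1 : ℤ := ((n-c:ℕ):ℤ) with hc1def
  have hcop : IsCoprime c1 (c:ℤ) := by
    rw [Int.isCoprime_iff_gcd_eq_one]
    have hd1 : (Int.gcd c1 (c:ℤ) : ℤ) ∣ (c:ℤ) - 1 := by
      rw [← h]
      exact dvd_sub (Dvd.dvd.mul_right (Int.gcd_dvd_left _ _) _) (Dvd.dvd.mul_right (Int.gcd_dvd_right _ _) _)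
    have hd2 : (Int.gcd c1 (c:ℤ) : ℤ) ∣ (c:ℤ) := Int.gcd_dvd_right _ _
    have : (Int.gcd c1 (c:ℤ) : ℤ) ∣ 1 := by
      have := dvd_sub hd2 hd1
      simpa using this
    exact_mod_cast Int.eq_one_of_dvd_one (by positivity) this
  have key : c1 * (I - I₀) = (c:ℤ) * (J - J₀) := by linarith [h, h₀]
  have hdI : (c:ℤ) ∣ (I - I₀) := by
    have : (c:ℤ) ∣ c1 * (I - I₀) := ⟨J - J₀, by linarith [key]⟩
    exact (hcop.symm).dvd_of_dvd_mul_left this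
  have hIeq : I = I₀ := by
    have := Int.eq_zero_of_abs_lt_dvd hdI (by rw [abs_sub_lt_iff]; omega)
    omega
  constructor
  · exact hIeq
  · have hc1pos : 0 < c1 := by simp [hc1def]; omega
    have : (c:ℤ) * (J - J₀) = 0 := by rw [← key, hIeq]; ring
    have := mul_eq_zero.mp this
    rcases this with e | e
    · exfalso; omega
    · omega

lemma vol_setU {n c : ℕ} (hc1 : 1 ≤ c) (hc2 : c < n) :
    volume (setU n c) ≤ ENNReal.ofReal (1 / (n * c)) := by
  rcases Set.eq_empty_or_nonempty (setU n c) with he | ⟨β₀, hβ₀⟩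
  · rw [he]; simp
  · obtain ⟨hβ₀m, hβ₀eq, hβ₀fr⟩ := hβ₀
    set I₀ : ℤ := ⌊(c:ℝ) * β₀⌋ with hI₀
    have hsub : setU n c ⊆ Set.Icc ((I₀:ℝ)/c) ((I₀:ℝ)/c + 1/(n*c)) := by
      rintro β ⟨hβm, hβeq, hβfr⟩
      have hfb := floor_bounds (by omega : 0 < c) hβm
      have hfb₀ := floor_bounds (by omega : 0 < c) hβ₀m
      have hfb' := floor_bounds (by omega : 0 < n - c) hβm
      have hfb₀' := floor_bounds (by omega : 0 < n - c) hβ₀m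
      have hpin := pin_coprime hc1 hc2 hβeq hβ₀eq
        ⟨hfb.1, by exact_mod_cast hfb.2⟩ ⟨hfb₀.1, by exact_mod_cast hfb₀.2⟩
        ⟨hfb'.1, by exact_mod_cast hfb'.2⟩ ⟨hfb₀'.1, by exact_mod_cast hfb₀'.2⟩
      have hIeq : ⌊(c:ℝ) * β⌋ = I₀ := hpin.1
      have hcR : (0:ℝ) < c := by exact_mod_cast (by omega : 0 < c)
      have hnR : (0:ℝ) < n := by exact_mod_cast (by omega : 0 < n)
      have hfr0 : (0:ℝ) ≤ Int.fract ((c:ℝ)*β) := Int.fract_nonneg _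
      have hfloor : Int.fract ((c:ℝ)*β) = (c:ℝ)*β - I₀ := by
        rw [← hIeq, Int.fract]
      constructor
      · rw [div_le_iff₀ hcR]; nlinarith [hfr0, hfloor]
      · have h1 : (c:ℝ) * β ≤ (I₀:ℝ) + 1/n := by linarith [hβfr, hfloor.le, hfloor.ge]
        have h2 : β ≤ ((I₀:ℝ) + 1/n)/c := by rw [le_div_iff₀ hcR]; linarith
        have h3 : ((I₀:ℝ) + 1/n)/c = (I₀:ℝ)/c + 1/(n*c) := by field_simp
        linarith
    calc volume (setU n c) ≤ volume (Set.Icc ((I₀:ℝ)/c) ((I₀:ℝ)/c + 1/(n*c))) :=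
          measure_mono hsub
      _ = ENNReal.ofReal (1/(n*c)) := by rw [Real.volume_Icc]; ring_nf

lemma vol_setV {n c : ℕ} (hc1 : 1 ≤ c) (hc2 : c < n) :
    volume (setV n c) ≤ ENNReal.ofReal (1 / (n * (n-c:ℕ))) := by
  rcases Set.eq_empty_or_nonempty (setV n c) with he | ⟨β₀, hβ₀⟩
  · rw [he]; simp
  · obtain ⟨hβ₀m, hβ₀eq, hβ₀fr⟩ := hβ₀
    set J₀ : ℤ := ⌊((n-c:ℕ):ℝ) * β₀⌋ with hJ₀
    set c1 : ℕ := n - c with hc1def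
    have hsub : setV n c ⊆ Set.Icc (((J₀:ℝ) + 1 - 1/n)/c1) (((J₀:ℝ) + 1)/c1) := by
      rintro β ⟨hβm, hβeq, hβfr⟩
      have hfb := floor_bounds (by omega : 0 < c) hβm
      have hfb₀ := floor_bounds (by omega : 0 < c) hβ₀m
      have hfb' := floor_bounds (by omega : 0 < n - c) hβm
      have hfb₀' := floor_bounds (by omega : 0 < n - c) hβ₀m
      have hpin := pin_coprime hc1 hc2 hβeq hβ₀eq
        ⟨hfb.1, by exact_mod_cast hfb.2⟩ ⟨hfb₀.1, by exact_mod_cast hfb₀.2⟩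
        ⟨hfb'.1, by exact_mod_cast hfb'.2⟩ ⟨hfb₀'.1, by exact_mod_cast hfb₀'.2⟩
      have hJeq : ⌊(c1:ℝ) * β⌋ = J₀ := hpin.2
      have hcR : (0:ℝ) < c1 := by exact_mod_cast (by omega : 0 < c1)
      have hnR : (0:ℝ) < n := by exact_mod_cast (by omega : 0 < n)
      have hfr1 : Int.fract ((c1:ℝ)*β) < 1 := Int.fract_lt_one _
      have hfloor : Int.fract ((c1:ℝ)*β) = (c1:ℝ)*β - J₀ := by
        rw [← hJeq, Int.fract]
      constructor
      · have h1 : (J₀:ℝ) + 1 - 1/n ≤ (c1:ℝ) * β := by linarith [hβfr, hfloor.le, hfloor.ge]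
        rw [div_le_iff₀ hcR]
        linarith
      · have h1 : (c1:ℝ) * β ≤ (J₀:ℝ) + 1 := by linarith [hfr1, hfloor.le, hfloor.ge]
        rw [le_div_iff₀ hcR]
        linarith
    calc volume (setV n c) ≤ volume (Set.Icc (((J₀:ℝ) + 1 - 1/n)/c1) (((J₀:ℝ) + 1)/c1)) :=
          measure_mono hsub
      _ ≤ ENNReal.ofReal (1/(n*(c1:ℕ))) := by
          rw [Real.volume_Icc]
          apply ENNReal.ofReal_le_ofReal
          have hcR : (0:ℝ) < c1 := by exact_mod_cast (by omega : 0 < c1)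
          have hnR : (0:ℝ) < n := by exact_mod_cast (by omega : 0 < n)
          have e : ((J₀:ℝ) + 1)/c1 - ((J₀:ℝ)+1-1/n)/c1 = 1/(n*c1) := by
            rw [div_sub_div_same, show ((J₀:ℝ) + 1) - ((J₀:ℝ)+1-1/n) = 1/n by ring, div_div]
          rw [e]

lemma badSet_cover (n : ℕ) :
    badSet n ∩ Set.Ioo (0:ℝ) 1 ⊆ ⋃ c ∈ Finset.Ico 1 n, (setU n c ∪ setV n c) := by
  rintro β ⟨⟨c1, c2, hc1, hc2, hc12, heq, hfr⟩, hβm⟩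
  have hc2n : c2 ∈ Finset.Ico 1 n := Finset.mem_Ico.mpr ⟨hc2, by omega⟩
  have hnc : n - c2 = c1 := by omega
  apply Set.mem_biUnion hc2n
  rcases hfr with h | h
  · left
    exact ⟨hβm, by rw [hnc]; exact heq, h⟩
  · right
    refine ⟨hβm, by rw [hnc]; exact heq, by rw [hnc]; exact h⟩

lemma sqrt_harm_aux (n : ℕ) : ∑ c ∈ Finset.Ico 1 (n+1), (1:ℝ)/c ≤ 2 * Real.sqrt n := by
  induction n with
  | zero => simp
  | succ n ih =>
    rw [Finset.sum_Ico_succ_top (by omega : 1 ≤ n + 1)]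
    set a := Real.sqrt n with ha
    set b := Real.sqrt (n+1) with hb
    have ha2 : a^2 = n := Real.sq_sqrt (by positivity)
    have hb2 : b^2 = (n:ℝ)+1 := by
      rw [hb]
      rw [show ((n:ℕ)+1 : ℝ) = ((n+1 : ℕ) : ℝ) by push_cast; ring]
      exact Real.sq_sqrt (by positivity)
    have ha0 : 0 ≤ a := Real.sqrt_nonneg _
    have hb0 : 0 ≤ b := Real.sqrt_nonneg _
    have hb1 : 1 ≤ b := by nlinarith
    have hab : a ≤ b := by
      rw [ha, hb]
      apply Real.sqrt_le_sqrt
      push_cast; linarith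
    have hbN : b ≤ (n:ℝ) + 1 := by nlinarith
    have haN : a ≤ (n:ℝ) + 1 := le_trans hab hbN
    have hNpos : (0:ℝ) < (n:ℝ) + 1 := by positivity
    have key : 1 ≤ 2 * ((n:ℝ)+1) * (b - a) := by
      have hd : (b - a) * (b + a) = 1 := by nlinarith
      nlinarith [mul_nonneg (sub_nonneg.mpr (by linarith : a + b ≤ 2*((n:ℝ)+1))) (sub_nonneg.mpr hab)]
    have h1n : (1:ℝ)/((n:ℕ)+1:ℕ) ≤ 2*(b-a) := by
      rw [div_le_iff₀ (by exact_mod_cast hNpos)]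
      push_cast
      nlinarith
    push_cast at h1n ⊢
    linarith [ih]

lemma sum_harm_le {n : ℕ} (hn : 1 ≤ n) :
    ∑ c ∈ Finset.Ico 1 n, (1:ℝ)/c ≤ 2 * Real.sqrt n := by
  have := sqrt_harm_aux (n-1)
  rw [show n - 1 + 1 = n by omega] at this
  apply le_trans this
  have : Real.sqrt (n-1:ℕ) ≤ Real.sqrt n := Real.sqrt_le_sqrt (by exact_mod_cast (by omega : n - 1 ≤ n))
  linarith

lemma badSet_vol {n : ℕ} (hn : 1 ≤ n) :
    volume (badSet n ∩ Set.Ioo (0:ℝ) 1) ≤ ENNReal.ofReal (4 / Real.sqrt n) := by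
  calc volume (badSet n ∩ Set.Ioo (0:ℝ) 1)
      ≤ ∑ c ∈ Finset.Ico 1 n, volume (setU n c ∪ setV n c) := by
        apply le_trans (measure_mono (badSet_cover n))
        exact measure_biUnion_finset_le _ _
    _ ≤ ∑ c ∈ Finset.Ico 1 n, (ENNReal.ofReal (1/(n*c)) + ENNReal.ofReal (1/(n*(n-c:ℕ)))) := by
        apply Finset.sum_le_sum
        intro c hc
        obtain ⟨h1, h2⟩ := Finset.mem_Ico.mp hc
        exact le_trans (measure_union_le _ _) (add_le_add (vol_setU h1 h2) (vol_setV h1 h2))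
    _ = ENNReal.ofReal (∑ c ∈ Finset.Ico 1 n, (1/(n*c) + 1/(n*(n-c:ℕ)) : ℝ)) := by
        rw [ENNReal.ofReal_sum_of_nonneg]
        · apply Finset.sum_congr rfl
          intro c hc
          obtain ⟨h1, h2⟩ := Finset.mem_Ico.mp hc
          rw [ENNReal.ofReal_add (by positivity) (by positivity)]
        · intro c hc
          obtain ⟨h1, h2⟩ := Finset.mem_Ico.mp hc
          have : (0:ℝ) < (n-c:ℕ) := by exact_mod_cast (by omega : 0 < n - c)
          positivity
    _ ≤ ENNReal.ofReal (4 / Real.sqrt n) := by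
        apply ENNReal.ofReal_le_ofReal
        have hnR : (0:ℝ) < n := by exact_mod_cast hn
        have hsq : (0:ℝ) < Real.sqrt n := Real.sqrt_pos.mpr hnR
        have hsq2 : Real.sqrt n * Real.sqrt n = n := Real.mul_self_sqrt (le_of_lt hnR)
        have e1 : ∑ c ∈ Finset.Ico 1 n, (1/(n*c) + 1/(n*(n-c:ℕ)) : ℝ)
            = (1/n) * (∑ c ∈ Finset.Ico 1 n, (1:ℝ)/c) + (1/n) * (∑ c ∈ Finset.Ico 1 n, (1:ℝ)/(n-c:ℕ)) := by
          rw [Finset.sum_add_distrib, Finset.mul_sum, Finset.mul_sum]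
          congr 1 <;> apply Finset.sum_congr rfl <;> intro c hc <;> rw [div_mul_div_comm] <;> ring_nf
        have e2 : ∑ c ∈ Finset.Ico 1 n, (1:ℝ)/(n-c:ℕ) = ∑ c ∈ Finset.Ico 1 n, (1:ℝ)/c := by
          refine Finset.sum_nbij' (fun c => n - c) (fun c => n - c) ?_ ?_ ?_ ?_ ?_
          · intro c hc
            simp only [Finset.mem_Ico] at hc ⊢
            omega
          · intro c hc
            simp only [Finset.mem_Ico] at hc ⊢
            omega
          · intro c hc
            simp only [Finset.mem_Ico] at hc
            omega
          · intro c hc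
            simp only [Finset.mem_Ico] at hc
            omega
          · intro c hc; rfl
        have e3 := sum_harm_le hn
        rw [e1, e2]
        have : (1/(n:ℝ)) * (2 * Real.sqrt n) = 2 / Real.sqrt n := by
          field_simp
          nlinarith [hsq2]
        have hfin : (1/(n:ℝ)) * (∑ c ∈ Finset.Ico 1 n, (1:ℝ)/c) ≤ 2 / Real.sqrt n := by
          rw [← this]
          apply mul_le_mul_of_nonneg_left e3 (by positivity)
        have : (4:ℝ) / Real.sqrt n = 2 / Real.sqrt n + 2 / Real.sqrt n := by ring
        linarith

noncomputable def countBad (N : ℕ) (β : ℝ) : ℕ :=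
  ((Finset.Icc 1 N).filter (fun n => β ∈ badSet n)).card

lemma countBad_eq_sum (N : ℕ) (β : ℝ) :
    (countBad N β : ℝ≥0∞) =
      ∑ n ∈ Finset.Icc 1 N, (badSet n).indicator (fun _ => (1:ℝ≥0∞)) β := by
  rw [countBad, Finset.card_filter]
  push_cast
  apply Finset.sum_congr rfl
  intro n _
  by_cases h : β ∈ badSet n <;> simp [h, Set.indicator_apply]

lemma countBad_measurable (N : ℕ) : Measurable (fun β => (countBad N β : ℝ≥0∞)) := by
  simp only [countBad_eq_sum]
  apply Finset.measurable_sum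
  intro n _
  exact measurable_const.indicator (badSet_measurable n)

lemma sqrt_sum_le (N : ℕ) : ∑ n ∈ Finset.Icc 1 N, (4:ℝ)/Real.sqrt n ≤ 8 * Real.sqrt N := by
  induction N with
  | zero => simp
  | succ N ih =>
    rw [Finset.sum_Icc_succ_top (by omega : 1 ≤ N+1)]
    have hcast : ((N+1:ℕ):ℝ) = (N:ℝ)+1 := by push_cast; ring
    set a := Real.sqrt N with hA
    set b := Real.sqrt ((N:ℝ)+1) with hB
    have ha2 : a^2 = N := Real.sq_sqrt (by positivity)
    have hb2 : b^2 = (N:ℝ)+1 := Real.sq_sqrt (by positivity)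
    have ha0 : 0 ≤ a := Real.sqrt_nonneg _
    have hb0 : 0 ≤ b := Real.sqrt_nonneg _
    have hb1 : 1 ≤ b := by nlinarith
    have hab : a ≤ b := by
      rw [hA, hB]; exact Real.sqrt_le_sqrt (by linarith)
    have hbpos : (0:ℝ) < b := by linarith
    have hd : (b-a)*(b+a) = 1 := by nlinarith
    have h8 : (4:ℝ)/b ≤ 8*(b-a) := by
      rw [div_le_iff₀ hbpos]
      nlinarith [sq_nonneg (b-a)]
    rw [hcast]
    calc ∑ n ∈ Finset.Icc 1 N, (4:ℝ)/Real.sqrt n + 4/b ≤ 8*a + 8*(b-a) := by linarith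
      _ = 8 * b := by ring

lemma countBad_lintegral (N : ℕ) :
    ∫⁻ β, (countBad N β : ℝ≥0∞) ∂(volume.restrict (Set.Ioo (0:ℝ) 1)) ≤
      ENNReal.ofReal (8 * Real.sqrt N) := by
  calc ∫⁻ β, (countBad N β : ℝ≥0∞) ∂(volume.restrict (Set.Ioo (0:ℝ) 1))
      = ∑ n ∈ Finset.Icc 1 N,
          ∫⁻ β, (badSet n).indicator (fun _ => (1:ℝ≥0∞)) β ∂(volume.restrict (Set.Ioo (0:ℝ) 1)) := by
        simp only [countBad_eq_sum]
        exact lintegral_finset_sum _ (fun n _ => measurable_const.indicator (badSet_measurable n))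
    _ = ∑ n ∈ Finset.Icc 1 N, (volume.restrict (Set.Ioo (0:ℝ) 1)) (badSet n) := by
        apply Finset.sum_congr rfl
        intro n _
        exact lintegral_indicator_one (badSet_measurable n)
    _ ≤ ∑ n ∈ Finset.Icc 1 N, ENNReal.ofReal (4 / Real.sqrt n) := by
        apply Finset.sum_le_sum
        intro n hn
        obtain ⟨h1, _⟩ := Finset.mem_Icc.mp hn
        rw [Measure.restrict_apply' measurableSet_Ioo]
        exact badSet_vol h1
    _ = ENNReal.ofReal (∑ n ∈ Finset.Icc 1 N, (4 / Real.sqrt n : ℝ)) := by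
        rw [ENNReal.ofReal_sum_of_nonneg]
        intro n hn
        positivity
    _ ≤ ENNReal.ofReal (8 * Real.sqrt N) := ENNReal.ofReal_le_ofReal (sqrt_sum_le N)


noncomputable def badW (j : ℕ) : Set ℝ :=
  {β : ℝ | ENNReal.ofReal ((2:ℝ)^j / ((j:ℝ)+1)^2) ≤ (countBad (2^j) β : ℝ≥0∞)}

lemma sqrt_two_pow (j : ℕ) : Real.sqrt ((2:ℝ)^j) = (Real.sqrt 2)^j := by
  induction j with
  | zero => simp
  | succ j ih => rw [pow_succ, pow_succ, Real.sqrt_mul (by positivity), ih]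

lemma badW_vol (j : ℕ) :
    (volume.restrict (Set.Ioo (0:ℝ) 1)) (badW j) ≤
      ENNReal.ofReal (8 * ((j:ℝ)+1)^2 * (Real.sqrt 2 / 2)^j) := by
  set μ := volume.restrict (Set.Ioo (0:ℝ) 1) with hμ
  set ε := ENNReal.ofReal ((2:ℝ)^j / ((j:ℝ)+1)^2) with hε
  have hεpos : (0:ℝ) < (2:ℝ)^j / ((j:ℝ)+1)^2 := by positivity
  have hε0 : ε ≠ 0 := by
    rw [hε, ne_eq, ENNReal.ofReal_eq_zero, not_le]
    exact hεpos
  have hεtop : ε ≠ ⊤ := ENNReal.ofReal_ne_top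
  have hmark := mul_meas_ge_le_lintegral₀ (μ := μ) (countBad_measurable (2^j)).aemeasurable ε
  have hcast : ((2^j : ℕ) : ℝ) = (2:ℝ)^j := by push_cast; ring
  have h1 : μ (badW j) * ε ≤ ENNReal.ofReal (8 * Real.sqrt ((2:ℝ)^j)) := by
    rw [mul_comm]
    refine le_trans hmark (le_trans (countBad_lintegral (2^j)) ?_)
    apply ENNReal.ofReal_le_ofReal
    rw [hcast]
  have h2 : μ (badW j) ≤ ENNReal.ofReal (8 * Real.sqrt ((2:ℝ)^j)) / ε :=
    (ENNReal.le_div_iff_mul_le (Or.inl hε0) (Or.inl hεtop)).mpr h1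
  refine le_trans h2 ?_
  rw [hε, ← ENNReal.ofReal_div_of_pos hεpos]
  apply ENNReal.ofReal_le_ofReal
  rw [sqrt_two_pow j]
  have h2pos : (0:ℝ) < (2:ℝ)^j := by positivity
  have e : (8 * (Real.sqrt 2)^j) / ((2:ℝ)^j / ((j:ℝ)+1)^2)
      = 8 * ((j:ℝ)+1)^2 * (Real.sqrt 2/2)^j := by
    rw [div_pow]
    field_simp
  rw [e]

/-- For Lebesgue-almost every `α ∈ (0,1)`, the density of `n` for which the
partition of `[0,1]` by `{0}, {α}, …, {(n-1)α}, 1` has exactly two distinct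
gap lengths is zero. -/
theorem two_gap_density_zero :
    ∀ᵐ α ∂(volume.restrict (Set.Ioo (0 : ℝ) 1)),
      Tendsto (fun N : ℕ =>
          (((Finset.Icc 1 N).filter (fun n => (gaps α n).ncard = 2)).card : ℝ) / N)
        atTop (nhds 0) := by
  set μ := volume.restrict (Set.Ioo (0:ℝ) 1) with hμ
  have hirr : ∀ᵐ β ∂μ, Irrational β := by
    rw [ae_iff]
    have he : {β : ℝ | ¬ Irrational β} = Set.range ((↑) : ℚ → ℝ) := by
      ext β
      simp [Irrational]
    rw [he, hμ, Measure.restrict_apply' measurableSet_Ioo]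
    apply measure_mono_null Set.inter_subset_left
    exact (Set.countable_range _).measure_zero _
  have hsummable : Summable (fun j : ℕ => 8 * ((j:ℝ)+1)^2 * (Real.sqrt 2/2)^j) := by
    have hr : ‖Real.sqrt 2 / 2‖ < 1 := by
      rw [Real.norm_eq_abs, abs_of_nonneg (by positivity)]
      nlinarith [Real.sq_sqrt (by norm_num : (0:ℝ) ≤ 2), Real.sqrt_nonneg 2]
    have h1 := summable_pow_mul_geometric_of_norm_lt_one 2 hr
    have h2 := summable_pow_mul_geometric_of_norm_lt_one 1 hr
    have h3 := summable_pow_mul_geometric_of_norm_lt_one 0 hr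
    have h4 : Summable (fun j : ℕ => ((j:ℝ)+1)^2 * (Real.sqrt 2/2)^j) := by
      have e : (fun j : ℕ => ((j:ℝ)+1)^2 * (Real.sqrt 2/2)^j)
          = fun j : ℕ => ((j:ℝ)^2*(Real.sqrt 2/2)^j) +
              (2*((j:ℝ)^1*(Real.sqrt 2/2)^j) + ((j:ℝ)^0*(Real.sqrt 2/2)^j)) := by
        funext j; ring
      rw [e]
      exact h1.add ((h2.mul_left 2).add h3)
    have := h4.mul_left 8
    simpa [mul_assoc] using this
  have htsum : ∑' j, μ (badW j) ≠ ⊤ := by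
    apply ne_top_of_le_ne_top ?_ (ENNReal.tsum_le_tsum badW_vol)
    rw [← ENNReal.ofReal_tsum_of_nonneg (fun j => by positivity) hsummable]
    exact ENNReal.ofReal_ne_top
  have hBC := MeasureTheory.ae_eventually_notMem htsum
  filter_upwards [hBC, hirr] with β hβW hβirr
  obtain ⟨J, hJ⟩ := (Filter.eventually_atTop).mp hβW
  have hsubset : ∀ N : ℕ, (Finset.Icc 1 N).filter (fun n => (gaps β n).ncard = 2) ⊆
      (Finset.Icc 1 N).filter (fun n => β ∈ badSet n) := by
    intro N n hn
    obtain ⟨hicc, h2⟩ := Finset.mem_filter.mp hn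
    obtain ⟨h1n, -⟩ := Finset.mem_Icc.mp hicc
    have hn2 : 2 ≤ n := by
      by_contra hlt
      have hone : n = 1 := by omega
      rw [hone, gaps_one, Set.ncard_singleton] at h2
      omega
    obtain ⟨c1, c2, H1, H2, H3, H4, H5⟩ := main_det hβirr hn2 h2
    exact Finset.mem_filter.mpr ⟨hicc, ⟨c1, c2, H1, H2, H3, H4, H5⟩⟩
  have glim : Tendsto (fun N : ℕ => 2/((Nat.log 2 N : ℝ)+2)^2) atTop (nhds 0) := by
    have hlog : Tendsto (fun N : ℕ => Nat.log 2 N) atTop atTop := by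
      apply Filter.tendsto_atTop_atTop.mpr
      intro b
      refine ⟨2^b, fun a ha => ?_⟩
      calc b = Nat.log 2 (2^b) := (Nat.log_pow (by norm_num) b).symm
        _ ≤ Nat.log 2 a := Nat.log_mono_right ha
    have houter : Tendsto (fun k : ℕ => 2/((k:ℝ)+2)^2) atTop (nhds 0) := by
      apply Filter.Tendsto.div_atTop tendsto_const_nhds
      apply tendsto_atTop_mono (fun k : ℕ => ?_) tendsto_natCast_atTop_atTop
      nlinarith [(by positivity : (0:ℝ) ≤ (k:ℝ))]
    exact houter.comp hlog
  apply squeeze_zero' ?_ ?_ glim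
  · filter_upwards [Filter.eventually_ge_atTop 1] with N hN
    positivity
  · filter_upwards [Filter.eventually_ge_atTop (max (2^J) 1)] with N hN
    have hN1 : 1 ≤ N := le_trans (le_max_right _ _) hN
    have hN2 : 2^J ≤ N := le_trans (le_max_left _ _) hN
    set j := Nat.log 2 N with hj
    have hjJ : J ≤ j := by
      calc J = Nat.log 2 (2^J) := (Nat.log_pow (by norm_num) J).symm
        _ ≤ j := Nat.log_mono_right hN2
    have hNl : 2^j ≤ N := Nat.pow_log_le_self 2 (by omega)
    have hNu : N < 2^(j+1) := Nat.lt_pow_succ_log_self (by norm_num) N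
    have hcard : (((Finset.Icc 1 N).filter (fun n => (gaps β n).ncard = 2)).card : ℝ) ≤
        (countBad (2^(j+1)) β : ℝ) := by
      have h1 := Finset.card_le_card (hsubset N)
      have h2 : countBad N β ≤ countBad (2^(j+1)) β :=
        Finset.card_le_card
          (Finset.filter_subset_filter _ (Finset.Icc_subset_Icc_right (by omega)))
      exact_mod_cast le_trans h1 h2
    have hWnot := hJ (j+1) (by omega)
    have hWlt : (countBad (2^(j+1)) β : ℝ) < (2:ℝ)^(j+1)/((j:ℝ)+2)^2 := by
      simp only [badW, Set.mem_setOf_eq, not_le] at hWnot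
      have hlt := (ENNReal.lt_ofReal_iff_toReal_lt (by simp)).mp hWnot
      rw [ENNReal.toReal_natCast] at hlt
      have e : ((((j+1:ℕ)):ℝ)+1)^2 = ((j:ℝ)+2)^2 := by push_cast; ring
      rw [e] at hlt
      exact hlt
    have hNpos : (0:ℝ) < N := by exact_mod_cast (by omega : 0 < N)
    have h2jpos : (0:ℝ) < (2:ℝ)^j := by positivity
    have hNlR : ((2:ℝ))^j ≤ N := by exact_mod_cast hNl
    have hcnonneg : (0:ℝ) ≤ (countBad (2^(j+1)) β : ℝ) := by positivity
    calc (((Finset.Icc 1 N).filter (fun n => (gaps β n).ncard = 2)).card : ℝ) / N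
        ≤ (countBad (2^(j+1)) β : ℝ) / (2:ℝ)^j :=
          div_le_div₀ hcnonneg hcard h2jpos hNlR
      _ ≤ ((2:ℝ)^(j+1)/((j:ℝ)+2)^2) / (2:ℝ)^j :=
          div_le_div₀ (by positivity) hWlt.le h2jpos le_rfl
      _ = 2/((j:ℝ)+2)^2 := by
          field_simp
          ring
end

section
/- Let Φ: ℕ → (0,∞). If the series ∑_{n=1}^∞ 1/Φ(n) converges, then the set E(Φ) = {x ∈ [0,1) : a_n(x) ≥ Φ(n) for infinitely many n} has Lebesgue measure 0. -/
open Filter MeasureTheory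

section Aux

open Set

lemma gaussMap_iterate_zero_fixed (m : ℕ) : gaussMap^[m] 0 = 0 := by
  apply Function.iterate_fixed
  simp [gaussMap]

lemma gaussMap_iterate_mem {x : ℝ} (hx : x ∈ Ico (0:ℝ) 1) (m : ℕ) :
    gaussMap^[m] x ∈ Ico (0:ℝ) 1 := by
  cases m with
  | zero => simpa using hx
  | succ m =>
    rw [Function.iterate_succ']
    exact ⟨Int.fract_nonneg _, Int.fract_lt_one _⟩


open Filter MeasureTheory Set

lemma measurable_gaussMap : Measurable gaussMap :=
  measurable_fract.comp measurable_inv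

/-- one-dim lintegral change of variables -/
lemma my_lintegral_image {s : Set ℝ} {f f' : ℝ → ℝ} (hs : MeasurableSet s)
    (hf' : ∀ x ∈ s, HasDerivWithinAt f (f' x) s x) (hf : Set.InjOn f s) (g : ℝ → ENNReal) :
    ∫⁻ x in f '' s, g x = ∫⁻ x in s, ENNReal.ofReal |f' x| * g (f x) := by
  simpa only [ContinuousLinearMap.det_toSpanSingleton] using
    lintegral_image_eq_lintegral_abs_det_fderiv_mul volume hs
      (fun x hx => (hf' x hx).hasFDerivWithinAt) hf g

lemma branch_eq (k : ℕ) (A : Set ℝ) (hA : MeasurableSet A) :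
    ∫⁻ x in (fun y => (((k : ℝ) + 1) + y)⁻¹) '' (A ∩ Ico 0 1), ENNReal.ofReal (2 / (1 + x))
      = ∫⁻ y in A ∩ Ico 0 1,
          ENNReal.ofReal (2 / ((((k : ℝ) + 1) + y) * (((k : ℝ) + 2) + y))) := by
  set c : ℝ := (k : ℝ) + 1 with hc
  have hs : MeasurableSet (A ∩ Ico 0 1) := hA.inter measurableSet_Ico
  have hpos : ∀ y ∈ A ∩ Ico (0:ℝ) 1, 0 < c + y := by
    intro y hy
    have : (0:ℝ) ≤ (k:ℝ) := Nat.cast_nonneg k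
    have := hy.2.1
    simp only [hc]; linarith
  have hderiv : ∀ y ∈ A ∩ Ico (0:ℝ) 1,
      HasDerivWithinAt (fun y => (c + y)⁻¹) (-1 / (c + y) ^ 2) (A ∩ Ico 0 1) y := by
    intro y hy
    exact (((hasDerivAt_id y).const_add c).inv (ne_of_gt (hpos y hy))).hasDerivWithinAt
  have hinj : Set.InjOn (fun y => (c + y)⁻¹) (A ∩ Ico 0 1) := by
    intro y1 _ y2 _ h
    have := inv_inj.mp h
    linarith
  rw [my_lintegral_image hs hderiv hinj]
  refine setLIntegral_congr_fun hs (fun y hy => ?_)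
  have h0 : 0 < c + y := hpos y hy
  have h1 : |(-1 / (c + y) ^ 2)| = 1 / (c + y) ^ 2 := by
    rw [abs_div, abs_neg, abs_one, abs_of_pos (by positivity : (0:ℝ) < (c+y)^2)]
  rw [h1, ← ENNReal.ofReal_mul (by positivity)]
  congr 1
  have h2 : (0:ℝ) < (k:ℝ) + 2 + y := by linarith
  field_simp
  ring

lemma cover_subset (A : Set ℝ) :
    gaussMap ⁻¹' A ∩ Ioo 0 1 ⊆
      ⋃ k : ℕ, (fun y => (((k : ℝ) + 1) + y)⁻¹) '' (A ∩ Ico 0 1) := by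
  rintro x ⟨hxA, hx0, hx1⟩
  have hinv1 : 1 < x⁻¹ := (one_lt_inv₀ hx0).mpr hx1
  have hm : 1 ≤ ⌊x⁻¹⌋ := Int.le_floor.mpr (by exact_mod_cast hinv1.le)
  refine Set.mem_iUnion.mpr ⟨⌊x⁻¹⌋.toNat - 1, Int.fract x⁻¹,
    ⟨hxA, Int.fract_nonneg _, Int.fract_lt_one _⟩, ?_⟩
  have h1 : (1:ℕ) ≤ ⌊x⁻¹⌋.toNat := by omega
  have hcast : ((⌊x⁻¹⌋.toNat - 1 : ℕ) : ℝ) + 1 = (⌊x⁻¹⌋ : ℝ) := by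
    have h2 : ((⌊x⁻¹⌋.toNat : ℤ) : ℝ) = ((⌊x⁻¹⌋ : ℤ) : ℝ) := by
      exact_mod_cast congrArg (fun z : ℤ => (z : ℝ)) (Int.toNat_of_nonneg (by omega))
    push_cast [Nat.cast_sub h1] at h2 ⊢
    linarith
  show ((((⌊x⁻¹⌋.toNat - 1 : ℕ) : ℝ) + 1) + Int.fract x⁻¹)⁻¹ = x
  rw [hcast, Int.floor_add_fract, inv_inv]

lemma telescope_le (y : ℝ) (hy : 0 ≤ y) :
    ∑' k : ℕ, ENNReal.ofReal (2 / ((((k : ℝ) + 1) + y) * (((k : ℝ) + 2) + y)))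
      ≤ ENNReal.ofReal (2 / (1 + y)) := by
  apply ENNReal.tsum_le_of_sum_range_le
  intro n
  have hterm : ∀ k : ℕ, (2 : ℝ) / (((k : ℝ) + 1 + y) * ((k : ℝ) + 2 + y))
      = 2 / ((k : ℝ) + 1 + y) - 2 / ((k : ℝ) + 2 + y) := by
    intro k
    have h1 : (0:ℝ) < (k : ℝ) + 1 + y := by positivity
    have h2 : (0:ℝ) < (k : ℝ) + 2 + y := by positivity
    field_simp
    ring
  rw [← ENNReal.ofReal_sum_of_nonneg (fun k _ => by positivity)]
  apply ENNReal.ofReal_le_ofReal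
  calc ∑ k ∈ Finset.range n, (2:ℝ) / (((k : ℝ) + 1 + y) * ((k : ℝ) + 2 + y))
      = ∑ k ∈ Finset.range n, ((fun k : ℕ => 2 / ((k : ℝ) + 1 + y)) k
          - (fun k : ℕ => 2 / ((k : ℝ) + 1 + y)) (k + 1)) := by
        refine Finset.sum_congr rfl fun k _ => ?_
        rw [hterm k]
        push_cast
        ring_nf
    _ = 2 / ((0:ℝ) + 1 + y) - 2 / ((n : ℝ) + 1 + y) := by
        rw [Finset.sum_range_sub' (fun k : ℕ => 2 / ((k : ℝ) + 1 + y)) n]; norm_num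
    _ ≤ 2 / (1 + y) := by
        have : (0:ℝ) ≤ 2 / ((n : ℝ) + 1 + y) := by positivity
        rw [zero_add]
        linarith

lemma measurable_D : Measurable (fun x : ℝ => ENNReal.ofReal (2 / (1 + x))) :=
  (measurable_const.div ((measurable_const.add measurable_id))).ennreal_ofReal

lemma transfer_le (A : Set ℝ) (hA : MeasurableSet A) :
    ∫⁻ x in gaussMap ⁻¹' A ∩ Ioo 0 1, ENNReal.ofReal (2 / (1 + x))
      ≤ ∫⁻ y in A ∩ Ioo 0 1, ENNReal.ofReal (2 / (1 + y)) := by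
  have step1 :
      ∫⁻ x in gaussMap ⁻¹' A ∩ Ioo 0 1, ENNReal.ofReal (2 / (1 + x))
        ≤ ∑' k : ℕ, ∫⁻ x in (fun y => (((k : ℝ) + 1) + y)⁻¹) '' (A ∩ Ico 0 1),
            ENNReal.ofReal (2 / (1 + x)) :=
    le_trans (lintegral_mono_set (cover_subset A)) (lintegral_iUnion_le _ _)
  have step2 :
      ∑' k : ℕ, ∫⁻ x in (fun y => (((k : ℝ) + 1) + y)⁻¹) '' (A ∩ Ico 0 1),
          ENNReal.ofReal (2 / (1 + x))
        = ∫⁻ y in A ∩ Ico 0 1,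
            ∑' k : ℕ, ENNReal.ofReal (2 / ((((k : ℝ) + 1) + y) * (((k : ℝ) + 2) + y))) := by
    rw [tsum_congr fun k => branch_eq k A hA]
    exact (lintegral_tsum (fun k =>
      ((measurable_const.div ((measurable_const.add measurable_id).mul
        (measurable_const.add measurable_id))).ennreal_ofReal).aemeasurable)).symm
  have step3 :
      ∫⁻ y in A ∩ Ico 0 1,
          ∑' k : ℕ, ENNReal.ofReal (2 / ((((k : ℝ) + 1) + y) * (((k : ℝ) + 2) + y)))
        ≤ ∫⁻ y in A ∩ Ico 0 1, ENNReal.ofReal (2 / (1 + y)) := by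
    refine setLIntegral_mono measurable_D fun y hy => telescope_le y hy.2.1
  have step4 : ∫⁻ y in A ∩ Ico 0 1, ENNReal.ofReal (2 / (1 + y))
      = ∫⁻ y in A ∩ Ioo 0 1, ENNReal.ofReal (2 / (1 + y)) := by
    refine setLIntegral_congr ?_
    exact MeasureTheory.ae_eq_set_inter (by rfl) Ioo_ae_eq_Ico.symm
  calc _ ≤ _ := step1
    _ = _ := step2
    _ ≤ _ := step3
    _ = _ := step4

lemma key_bound (n : ℕ) (A : Set ℝ) (hA : MeasurableSet A) :
    volume (gaussMap^[n] ⁻¹' A ∩ Ioo 0 1)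
      ≤ ∫⁻ x in A ∩ Ioo 0 1, ENNReal.ofReal (2 / (1 + x)) := by
  induction n generalizing A with
  | zero =>
    rw [Function.iterate_zero, Set.preimage_id]
    rw [← setLIntegral_one]
    refine setLIntegral_mono measurable_D fun x hx => ?_
    rw [show (1 : ENNReal) = ENNReal.ofReal 1 by simp]
    refine ENNReal.ofReal_le_ofReal ?_
    rw [le_div_iff₀ (by linarith [hx.2.1] : (0:ℝ) < 1 + x)]
    linarith [hx.2.2]
  | succ n ih =>
    rw [Function.iterate_succ', Set.preimage_comp]
    exact le_trans (ih _ (hA.preimage measurable_gaussMap)) (transfer_le A hA)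

end Aux

/-- Borel–Bernstein (convergence half): if `∑ 1/Φ(n)` converges then
`E(Φ) = {x ∈ [0,1) : aₙ(x) ≥ Φ(n) for infinitely many n}` is Lebesgue-null. -/
theorem borel_bernstein_convergence (Φ : ℕ → ℝ) (hΦ : ∀ n, 0 < Φ n)
    (hsum : Summable (fun n => 1 / Φ n)) :
    volume {x ∈ Set.Ico (0 : ℝ) 1 | ∃ᶠ n in atTop, Φ n ≤ (cfA x n : ℝ)} = 0 := by
  set E : ℕ → Set ℝ := fun n =>
    gaussMap^[n - 1] ⁻¹' (Set.Ioc 0 (1 / (⌈Φ n⌉₊ : ℝ))) ∩ Set.Ioo 0 1 with hE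
  have hsub : {x ∈ Set.Ico (0:ℝ) 1 | ∃ᶠ n in atTop, Φ n ≤ (cfA x n : ℝ)}
      ⊆ limsup E atTop := by
    rintro x ⟨hx, hfreq⟩
    rw [Filter.mem_limsup_iff_frequently_mem]
    refine hfreq.mono fun n hn => ?_
    have hfl : Φ n ≤ (⌊(gaussMap^[n - 1] x)⁻¹⌋₊ : ℝ) := hn
    have hy0 : 0 < gaussMap^[n - 1] x := by
      rcases (gaussMap_iterate_mem hx (n - 1)).1.lt_or_eq with h | h
      · exact h
      · exfalso
        rw [← h] at hfl
        norm_num at hfl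
        linarith [hΦ n]
    have hx0 : 0 < x := by
      rcases hx.1.lt_or_eq with h | h
      · exact h
      · exfalso
        rw [← h, gaussMap_iterate_zero_fixed] at hy0
        exact lt_irrefl 0 hy0
    have hceil : ⌈Φ n⌉₊ ≤ ⌊(gaussMap^[n - 1] x)⁻¹⌋₊ := Nat.ceil_le.mpr hfl
    have hNpos : (0:ℝ) < (⌈Φ n⌉₊ : ℝ) := by
      exact_mod_cast Nat.ceil_pos.mpr (hΦ n)
    have h2 : (⌈Φ n⌉₊ : ℝ) ≤ (gaussMap^[n - 1] x)⁻¹ :=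
      le_trans (by exact_mod_cast hceil) (Nat.floor_le (by positivity))
    have h3 : gaussMap^[n - 1] x ≤ 1 / (⌈Φ n⌉₊ : ℝ) := by
      rw [le_div_iff₀ hNpos]
      calc gaussMap^[n - 1] x * (⌈Φ n⌉₊ : ℝ)
          ≤ gaussMap^[n - 1] x * (gaussMap^[n - 1] x)⁻¹ :=
            mul_le_mul_of_nonneg_left h2 hy0.le
        _ = 1 := mul_inv_cancel₀ hy0.ne'
    exact ⟨⟨hy0, h3⟩, hx0, hx.2⟩
  have hbound : ∀ n, volume (E n) ≤ ENNReal.ofReal (2 / Φ n) := by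
    intro n
    calc volume (E n)
        ≤ ∫⁻ x in Set.Ioc 0 (1 / (⌈Φ n⌉₊ : ℝ)) ∩ Set.Ioo 0 1,
            ENNReal.ofReal (2 / (1 + x)) := key_bound _ _ measurableSet_Ioc
      _ ≤ ∫⁻ _ in Set.Ioc 0 (1 / (⌈Φ n⌉₊ : ℝ)) ∩ Set.Ioo 0 1, (ENNReal.ofReal 2) := by
          refine setLIntegral_mono measurable_const fun x hx => ?_
          refine ENNReal.ofReal_le_ofReal ?_
          rw [div_le_iff₀ (by linarith [hx.1.1] : (0:ℝ) < 1 + x)]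
          nlinarith [hx.1.1]
      _ = ENNReal.ofReal 2 * volume (Set.Ioc 0 (1 / (⌈Φ n⌉₊ : ℝ)) ∩ Set.Ioo 0 1) :=
          setLIntegral_const _ _
      _ ≤ ENNReal.ofReal 2 * volume (Set.Ioc (0:ℝ) (1 / (⌈Φ n⌉₊ : ℝ))) := by
          gcongr
          exact Set.inter_subset_left
      _ = ENNReal.ofReal 2 * ENNReal.ofReal (1 / (⌈Φ n⌉₊ : ℝ)) := by
          rw [Real.volume_Ioc]; norm_num
      _ = ENNReal.ofReal (2 * (1 / (⌈Φ n⌉₊ : ℝ))) :=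
          (ENNReal.ofReal_mul (by norm_num)).symm
      _ ≤ ENNReal.ofReal (2 / Φ n) := by
          refine ENNReal.ofReal_le_ofReal ?_
          rw [mul_one_div]
          gcongr
          · exact hΦ n
          · exact Nat.le_ceil (Φ n)
  have htsum : ∑' n, volume (E n) ≠ ⊤ := by
    have h2 : Summable (fun n => 2 / Φ n) := by
      have := hsum.mul_left 2
      simpa [mul_one_div, div_eq_mul_inv] using this
    refine ne_top_of_le_ne_top ?_ (ENNReal.tsum_le_tsum hbound)
    rw [← ENNReal.ofReal_tsum_of_nonneg (fun n => div_nonneg (by norm_num) (hΦ n).le) h2]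
    exact ENNReal.ofReal_ne_top
  exact measure_mono_null hsub (measure_limsup_atTop_eq_zero htsum)
end
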